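/- arXiv:2307.10531 — 3 statements merged into one kernel-verified Lean document; each statement's English description precedes it below -/
import Mathlib

section
/- Let W = (W_k)_{k∈ℤ} and I = (I_k)_{k∈ℤ} be bi-infinite sequences of strictly positive reals whose left-tail logarithmic Cesàro limits 𝔠(W) = lim_{n→∞} (1/n) Σ_{k=-n+1}^{0} log W_k and 𝔠(I) exist and satisfy 𝔠(W) < 𝔠(I). Then for every k ∈ ℤ the series J_k = Σ_{i=-∞}^{k} W_i ∏_{j=i+1}^{k} (W_j / I_j) converges to a finite positive real, and the sequence J satisfies the recursion J_k = W_k (1 + J_{k-1}/I_k) for all k ∈ ℤ. -/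
open Filter Topology

noncomputable section

/-- Left-tail logarithmic Cesàro limit of a bi-infinite positive sequence. -/
def cesaroLim (X : ℤ → ℝ) (c : ℝ) : Prop :=
  Filter.Tendsto (fun n : ℕ => (∑ k ∈ Finset.range n, Real.log (X (-(k : ℤ)))) / (n : ℝ))
    Filter.atTop (nhds c)

/-- The `m`-th term of the series defining `J_k = Σ_{i ≤ k} W_i ∏_{j=i+1}^k (W_j / I_j)`,
corresponding to `i = k - m`. -/
def Jterm (W I : ℤ → ℝ) (k : ℤ) (m : ℕ) : ℝ :=
  W (k - (m : ℤ)) * ∏ r ∈ Finset.range m, (W (k - (r : ℤ)) / I (k - (r : ℤ)))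

/-- `S(W,I)_k = Σ_{i ≤ k} W_i ∏_{j=i+1}^k (W_j / I_j)`. -/
def Smap (W I : ℤ → ℝ) (k : ℤ) : ℝ := ∑' m : ℕ, Jterm W I k m

/-- The update map `D(W,I)_k = I_k J_k / J_{k-1}`. -/
def Dmap (W I : ℤ → ℝ) (k : ℤ) : ℝ := I k * Smap W I k / Smap W I (k - 1)

/-- The dual-weight map `R(W,I)_k = (I_k⁻¹ + J_{k-1}⁻¹)⁻¹`. -/
def Rmap (W I : ℤ → ℝ) (k : ℤ) : ℝ := ((I k)⁻¹ + (Smap W I (k - 1))⁻¹)⁻¹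

lemma shift_sub (S : ℕ → ℝ) (c : ℝ) (h : Tendsto (fun n : ℕ => S n / n) atTop (𝓝 c)) :
    Tendsto (fun n : ℕ => S (n - 1) / n) atTop (𝓝 c) := by
  have hA : Tendsto (fun n : ℕ => S (n - 1) / ((n - 1 : ℕ) : ℝ)) atTop (𝓝 c) :=
    h.comp (tendsto_sub_atTop_nat 1)
  have hB : Tendsto (fun n : ℕ => ((n - 1 : ℕ) : ℝ) / n) atTop (𝓝 1) := by
    have h1 : Tendsto (fun n : ℕ => 1 - 1 / (n : ℝ)) atTop (𝓝 (1 - 0)) :=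
      tendsto_const_nhds.sub tendsto_one_div_atTop_nhds_zero_nat
    rw [sub_zero] at h1
    apply Tendsto.congr' _ h1
    filter_upwards [eventually_ge_atTop 1] with n hn
    have hn0 : (n : ℝ) ≠ 0 := by positivity
    rw [Nat.cast_sub hn]
    push_cast
    field_simp
  have hC := hA.mul hB
  rw [mul_one] at hC
  apply Tendsto.congr' _ hC
  filter_upwards [eventually_ge_atTop 2] with n hn
  have hne : ((n - 1 : ℕ) : ℝ) ≠ 0 := by
    simp only [ne_eq, Nat.cast_eq_zero]; omega
  have hn0 : (n : ℝ) ≠ 0 := by positivity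
  rw [div_mul_div_comm, mul_comm ((n - 1 : ℕ) : ℝ) (n : ℝ), mul_div_mul_right _ _ hne]

lemma shift_add (S : ℕ → ℝ) (c : ℝ) (h : Tendsto (fun n : ℕ => S n / n) atTop (𝓝 c)) :
    Tendsto (fun n : ℕ => S (n + 1) / n) atTop (𝓝 c) := by
  have hA : Tendsto (fun n : ℕ => S (n + 1) / ((n + 1 : ℕ) : ℝ)) atTop (𝓝 c) :=
    h.comp (tendsto_add_atTop_nat 1)
  have hB : Tendsto (fun n : ℕ => ((n + 1 : ℕ) : ℝ) / n) atTop (𝓝 1) := by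
    have h1 : Tendsto (fun n : ℕ => 1 + 1 / (n : ℝ)) atTop (𝓝 (1 + 0)) :=
      tendsto_const_nhds.add tendsto_one_div_atTop_nhds_zero_nat
    rw [add_zero] at h1
    apply Tendsto.congr' _ h1
    filter_upwards [eventually_ge_atTop 1] with n hn
    have hn0 : (n : ℝ) ≠ 0 := by positivity
    push_cast
    field_simp
  have hC := hA.mul hB
  rw [mul_one] at hC
  apply Tendsto.congr' _ hC
  filter_upwards [eventually_ge_atTop 1] with n hn
  have hn0 : (n : ℝ) ≠ 0 := by positivity
  have hne : ((n + 1 : ℕ) : ℝ) ≠ 0 := by positivity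
  rw [div_mul_div_comm, mul_comm ((n + 1 : ℕ) : ℝ) (n : ℝ), mul_div_mul_right _ _ hne]

lemma const_add_div (S : ℕ → ℝ) (c a : ℝ) (h : Tendsto (fun n : ℕ => S n / n) atTop (𝓝 c)) :
    Tendsto (fun n : ℕ => (a + S n) / n) atTop (𝓝 c) := by
  have h2 := (tendsto_const_div_atTop_nhds_zero_nat a).add h
  rw [zero_add] at h2
  apply h2.congr
  intro n
  rw [add_div]

lemma cesaro_shift {f : ℤ → ℝ} {c : ℝ}
    (h : Tendsto (fun n : ℕ => (∑ r ∈ Finset.range n, f (-(r : ℤ))) / n) atTop (𝓝 c)) (k : ℤ) :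
    Tendsto (fun n : ℕ => (∑ r ∈ Finset.range n, f (k - (r : ℤ))) / n) atTop (𝓝 c) := by
  induction k using Int.induction_on with
  | zero => simpa [zero_sub] using h
  | succ k ih =>
    have key : ∀ n : ℕ, 1 ≤ n →
        (∑ r ∈ Finset.range n, f ((k : ℤ) + 1 - (r : ℤ)))
          = f ((k : ℤ) + 1) + ∑ r ∈ Finset.range (n - 1), f ((k : ℤ) - (r : ℤ)) := by
      intro n hn
      obtain ⟨m, rfl⟩ : ∃ m, n = m + 1 := ⟨n - 1, by omega⟩
      rw [Finset.sum_range_succ']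
      simp only [Nat.add_sub_cancel, Nat.cast_zero, sub_zero]
      rw [add_comm]
      congr 1
      apply Finset.sum_congr rfl
      intro r _
      congr 1
      push_cast
      ring
    have hc := shift_sub _ c (const_add_div _ c (f ((k : ℤ) + 1)) ih)
    apply Tendsto.congr' _ hc
    filter_upwards [eventually_ge_atTop 1] with n hn
    rw [key n hn]
  | pred k ih =>
    have key : ∀ n : ℕ,
        (∑ r ∈ Finset.range n, f (-(k : ℤ) - 1 - (r : ℤ)))
          = (-(f (-(k : ℤ)))) + ∑ r ∈ Finset.range (n + 1), f (-(k : ℤ) - (r : ℤ)) := by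
      intro n
      rw [Finset.sum_range_succ']
      have he : ∀ r ∈ Finset.range n,
          f (-(k : ℤ) - ((r : ℕ) + 1 : ℕ)) = f (-(k : ℤ) - 1 - (r : ℤ)) := by
        intro r _
        congr 1
        push_cast
        ring
      rw [Finset.sum_congr rfl he]
      simp only [Nat.cast_zero, sub_zero]
      ring
    have hc := shift_add _ c (const_add_div _ c (-(f (-(k : ℤ)))) ih)
    apply Tendsto.congr' _ hc
    filter_upwards with n
    rw [key n]

lemma Jterm_pos {W I : ℤ → ℝ} (hW : ∀ k, 0 < W k) (hI : ∀ k, 0 < I k) (k : ℤ) (m : ℕ) :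
    0 < Jterm W I k m :=
  mul_pos (hW _) (Finset.prod_pos fun r _ => div_pos (hW _) (hI _))

lemma log_Jterm_tendsto {W I : ℤ → ℝ} {cW cI : ℝ}
    (hW : ∀ k, 0 < W k) (hI : ∀ k, 0 < I k)
    (hcW : cesaroLim W cW) (hcI : cesaroLim I cI) (k : ℤ) :
    Tendsto (fun m : ℕ => Real.log (Jterm W I k m) / m) atTop (𝓝 (cW - cI)) := by
  have hWs := cesaro_shift (f := fun j => Real.log (W j)) hcW k
  have hIs := cesaro_shift (f := fun j => Real.log (I j)) hcI k
  -- log term decomposition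
  have hlog : ∀ m : ℕ, Real.log (Jterm W I k m)
      = Real.log (W (k - (m : ℤ)))
        + ((∑ r ∈ Finset.range m, Real.log (W (k - (r : ℤ))))
          - ∑ r ∈ Finset.range m, Real.log (I (k - (r : ℤ)))) := by
    intro m
    unfold Jterm
    rw [Real.log_mul (hW _).ne' (Finset.prod_pos fun r _ => div_pos (hW _) (hI _)).ne',
      Real.log_prod (fun r _ => (div_pos (hW _) (hI _)).ne')]
    congr 1
    rw [← Finset.sum_sub_distrib]
    apply Finset.sum_congr rfl
    intro r _
    rw [Real.log_div (hW _).ne' (hI _).ne']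
  -- first part tends to 0
  have h1 : Tendsto (fun m : ℕ => Real.log (W (k - (m : ℤ))) / m) atTop (𝓝 0) := by
    have hAdd := shift_add _ cW hWs
    have := hAdd.sub hWs
    rw [sub_self] at this
    apply this.congr
    intro m
    rw [Finset.sum_range_succ, ← sub_div]
    ring_nf
  have h2 : Tendsto (fun m : ℕ =>
      ((∑ r ∈ Finset.range m, Real.log (W (k - (r : ℤ))))
        - ∑ r ∈ Finset.range m, Real.log (I (k - (r : ℤ)))) / m) atTop (𝓝 (cW - cI)) := by
    have := hWs.sub hIs
    apply this.congr
    intro m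
    rw [sub_div]
  have := h1.add h2
  rw [zero_add] at this
  apply this.congr
  intro m
  rw [← add_div, ← hlog m]

lemma Jterm_summable {W I : ℤ → ℝ} {cW cI : ℝ}
    (hW : ∀ k, 0 < W k) (hI : ∀ k, 0 < I k)
    (hcW : cesaroLim W cW) (hcI : cesaroLim I cI) (hlt : cW < cI) (k : ℤ) :
    Summable (Jterm W I k) := by
  set δ : ℝ := cI - cW with hδdef
  have hδ : 0 < δ := by simp [hδdef, sub_pos, hlt]
  have hten := log_Jterm_tendsto hW hI hcW hcI k
  have hev : ∀ᶠ m : ℕ in atTop, Real.log (Jterm W I k m) / m < -(δ / 2) := by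
    apply hten.eventually_lt_const
    rw [hδdef]
    linarith
  have hr1 : Real.exp (-(δ / 2)) < 1 := by
    rw [Real.exp_lt_one_iff]
    linarith
  apply summable_of_isBigO_nat (summable_geometric_of_lt_one (Real.exp_pos _).le hr1)
  apply Asymptotics.IsBigO.of_bound 1
  filter_upwards [hev, eventually_ge_atTop 1] with m hm hm1
  have hmp : (0 : ℝ) < m := by exact_mod_cast hm1
  have hlogb : Real.log (Jterm W I k m) < -(δ / 2) * m := by
    have := (div_lt_iff₀ hmp).mp hm
    linarith
  have hJpos := Jterm_pos hW hI k m
  have hJle : Jterm W I k m ≤ Real.exp (-(δ / 2)) ^ m := by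
    rw [← Real.exp_nat_mul]
    calc Jterm W I k m = Real.exp (Real.log (Jterm W I k m)) := (Real.exp_log hJpos).symm
      _ ≤ Real.exp ((m : ℝ) * -(δ / 2)) := by
          apply Real.exp_le_exp.mpr
          rw [mul_comm]
          exact hlogb.le
  rw [one_mul, Real.norm_eq_abs, Real.norm_eq_abs, abs_of_pos hJpos, abs_of_pos (pow_pos (Real.exp_pos _) m)]
  exact hJle

lemma Jterm_zero (W I : ℤ → ℝ) (k : ℤ) : Jterm W I k 0 = W k := by
  simp [Jterm]

lemma Jterm_succ (W I : ℤ → ℝ) (k : ℤ) (m : ℕ) :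
    Jterm W I k (m + 1) = (W k / I k) * Jterm W I (k - 1) m := by
  unfold Jterm
  rw [Finset.prod_range_succ']
  have he : ∀ r ∈ Finset.range m,
      W (k - ((r : ℕ) + 1 : ℕ)) / I (k - ((r : ℕ) + 1 : ℕ))
        = W (k - 1 - (r : ℤ)) / I (k - 1 - (r : ℤ)) := by
    intro r _
    have : k - ((r : ℕ) + 1 : ℕ) = k - 1 - (r : ℤ) := by push_cast; ring
    rw [this]
  rw [Finset.prod_congr rfl he]
  have hk : k - ((m + 1 : ℕ) : ℤ) = k - 1 - (m : ℤ) := by push_cast; ring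
  rw [hk]
  simp only [Nat.cast_zero, sub_zero]
  ring

theorem stmt0 (W I : ℤ → ℝ) (cW cI : ℝ)
    (hW : ∀ k, 0 < W k) (hI : ∀ k, 0 < I k)
    (hcW : cesaroLim W cW) (hcI : cesaroLim I cI) (hlt : cW < cI) :
    (∀ k : ℤ, Summable (Jterm W I k)) ∧
    (∀ k : ℤ, 0 < Smap W I k) ∧
    (∀ k : ℤ, Smap W I k = W k * (1 + Smap W I (k - 1) / I k)) := by
  have hsum : ∀ k : ℤ, Summable (Jterm W I k) := fun k => Jterm_summable hW hI hcW hcI hlt k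
  have hpos : ∀ k : ℤ, 0 < Smap W I k := fun k =>
    Summable.tsum_pos (hsum k) (fun m => (Jterm_pos hW hI k m).le) 0 (Jterm_pos hW hI k 0)
  refine ⟨hsum, hpos, fun k => ?_⟩
  have h1 : Smap W I k = Jterm W I k 0 + ∑' m : ℕ, Jterm W I k (m + 1) :=
    Summable.tsum_eq_zero_add (hsum k)
  rw [h1, Jterm_zero]
  have h2 : (∑' m : ℕ, Jterm W I k (m + 1)) = (W k / I k) * Smap W I (k - 1) := by
    rw [show (fun m : ℕ => Jterm W I k (m + 1)) = fun m : ℕ => (W k / I k) * Jterm W I (k - 1) m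
      from funext fun m => Jterm_succ W I k m]
    rw [tsum_mul_left]
    rfl
  rw [h2]
  have hIk : I k ≠ 0 := (hI k).ne'
  field_simp
end
end

section
/- Let W, I be positive bi-infinite sequences with finite Cesàro limits 𝔠(W) < 𝔠(I), let J_k = Σ_{i≤k} W_i ∏_{j=i+1}^{k} (W_j/I_j), and define the updated sequences Ĩ_k = I_k J_k / J_{k-1} and W̃_k = (I_k^{-1} + J_{k-1}^{-1})^{-1}. Then lim_{k→-∞} (log J_k)/|k| = 0, and consequently 𝔠(Ĩ) = 𝔠(I) and 𝔠(W̃) = 𝔠(W). -/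
open Filter Topology

noncomputable section

namespace StmtAux

/-- Partial log sums. -/
def logA (X : ℤ → ℝ) (n : ℕ) : ℝ := ∑ k ∈ Finset.range n, Real.log (X (-(k : ℤ)))

lemma cesaroLim_iff (X : ℤ → ℝ) (c : ℝ) :
    cesaroLim X c ↔ Tendsto (fun n : ℕ => logA X n / (n : ℝ)) atTop (nhds c) := Iff.rfl

lemma Jterm_pos {W I : ℤ → ℝ} (hW : ∀ k, 0 < W k) (hI : ∀ k, 0 < I k) (k : ℤ) (m : ℕ) :
    0 < Jterm W I k m :=
  mul_pos (hW _) (Finset.prod_pos fun _ _ => div_pos (hW _) (hI _))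

lemma Jterm_succ (W I : ℤ → ℝ) (k : ℤ) (m : ℕ) :
    Jterm W I k (m + 1) = (W k / I k) * Jterm W I (k - 1) m := by
  unfold Jterm
  rw [Finset.prod_range_succ']
  have h0 : k - ((0 : ℕ) : ℤ) = k := by push_cast; ring
  have h1 : k - ((m + 1 : ℕ) : ℤ) = (k - 1) - (m : ℤ) := by push_cast; ring
  have h2 : ∀ r : ℕ, k - ((r + 1 : ℕ) : ℤ) = (k - 1) - (r : ℤ) := fun r => by push_cast; ring
  simp only [h0, h1, h2]
  ring

lemma summable_step {W I : ℤ → ℝ} {k : ℤ} (hk : Summable (Jterm W I (k - 1))) :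
    Summable (Jterm W I k) := by
  rw [← summable_nat_add_iff 1]
  have h : (fun m => Jterm W I k (m + 1)) = fun m => (W k / I k) * Jterm W I (k - 1) m :=
    funext (Jterm_succ W I k)
  rw [h]
  exact hk.mul_left _

lemma Smap_rec {W I : ℤ → ℝ} {k : ℤ} (hk : Summable (Jterm W I (k - 1))) :
    Smap W I k = W k + (W k / I k) * Smap W I (k - 1) := by
  have hs : Summable (Jterm W I k) := summable_step hk
  unfold Smap
  rw [Summable.tsum_eq_zero_add hs]
  congr 1
  · simp [Jterm]
  · have h : (fun m => Jterm W I k (m + 1)) = fun m => (W k / I k) * Jterm W I (k - 1) m :=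
      funext (Jterm_succ W I k)
    rw [h, tsum_mul_left]

lemma log_Jterm {W I : ℤ → ℝ} (hW : ∀ k, 0 < W k) (hI : ∀ k, 0 < I k) (n m : ℕ) :
    Real.log (Jterm W I (-(n : ℤ)) m) =
      logA W (n + m + 1) - logA W n - (logA I (n + m) - logA I n) := by
  unfold Jterm
  rw [Real.log_mul (hW _).ne' (Finset.prod_pos fun _ _ => div_pos (hW _) (hI _)).ne',
      Real.log_prod (fun r _ => (div_pos (hW _) (hI _)).ne')]
  simp only [Real.log_div (hW _).ne' (hI _).ne']
  rw [Finset.sum_sub_distrib]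
  have eW : ∀ r : ℕ, (-(n : ℤ) - (r : ℤ)) = -(((n + r : ℕ)) : ℤ) := fun r => by push_cast; ring
  unfold logA
  rw [Finset.sum_range_succ, Finset.sum_range_add (fun k => Real.log (W (-(k : ℤ)))) n m,
      Finset.sum_range_add (fun k => Real.log (I (-(k : ℤ)))) n m]
  simp only [eW]
  ring

/-- Each term of a converging Cesàro average is `o(n)`. -/
lemma cesaro_term_div (f : ℕ → ℝ) (c : ℝ)
    (h : Tendsto (fun n : ℕ => (∑ k ∈ Finset.range n, f k) / (n : ℝ)) atTop (nhds c)) :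
    Tendsto (fun n : ℕ => f n / (n : ℝ)) atTop (nhds 0) := by
  have hrat : Tendsto (fun n : ℕ => ((n : ℝ) + 1) / n) atTop (nhds 1) := by
    have h' : Tendsto (fun n : ℕ => 1 + 1 / (n : ℝ)) atTop (nhds (1 + 0)) :=
      tendsto_const_nhds.add tendsto_one_div_atTop_nhds_zero_nat
    rw [add_zero] at h'
    apply h'.congr'
    filter_upwards [eventually_ge_atTop 1] with n hn
    have hn0 : (n : ℝ) ≠ 0 := Nat.cast_ne_zero.2 (by omega)
    field_simp
  have h1 : Tendsto (fun n : ℕ => (∑ k ∈ Finset.range (n + 1), f k) / ((n : ℝ) + 1)) atTop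
      (nhds c) := by
    have h' := h.comp (tendsto_add_atTop_nat 1)
    refine h'.congr fun n => ?_
    show (∑ k ∈ Finset.range (n + 1), f k) / ((n + 1 : ℕ) : ℝ) = _
    push_cast
    ring
  have h2 : Tendsto (fun n : ℕ =>
      (∑ k ∈ Finset.range (n + 1), f k) / ((n : ℝ) + 1) * (((n : ℝ) + 1) / n)
      - (∑ k ∈ Finset.range n, f k) / (n : ℝ)) atTop (nhds (c * 1 - c)) :=
    (h1.mul hrat).sub h
  have heq : ∀ᶠ n : ℕ in atTop, (∑ k ∈ Finset.range (n + 1), f k) / ((n : ℝ) + 1) *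
      (((n : ℝ) + 1) / n) - (∑ k ∈ Finset.range n, f k) / (n : ℝ) = f n / n := by
    filter_upwards [eventually_ge_atTop 1] with n hn
    have hn0 : (n : ℝ) ≠ 0 := Nat.cast_ne_zero.2 (by omega)
    have hn1 : (n : ℝ) + 1 ≠ 0 := by positivity
    rw [Finset.sum_range_succ]
    field_simp
    ring
  have h3 := h2.congr' heq
  simpa using h3

section Main

variable {W I : ℤ → ℝ} {cW cI : ℝ}
variable (hW : ∀ k, 0 < W k) (hI : ∀ k, 0 < I k)
variable (hcW : cesaroLim W cW) (hcI : cesaroLim I cI) (hlt : cW < cI)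

include hcW hcI in
lemma eps_bound {ε : ℝ} (hε : 0 < ε) :
    ∃ N : ℕ, 1 ≤ N ∧ ∀ n, N ≤ n →
      |logA W n - n * cW| ≤ ε * n ∧ |logA I n - n * cI| ≤ ε * n := by
  rw [cesaroLim_iff] at hcW hcI
  obtain ⟨N1, hN1⟩ := (Metric.tendsto_atTop.1 hcW) ε hε
  obtain ⟨N2, hN2⟩ := (Metric.tendsto_atTop.1 hcI) ε hε
  refine ⟨max 1 (max N1 N2), le_max_left _ _, fun n hn => ?_⟩
  have hn1 : 1 ≤ n := le_trans (le_max_left _ _) hn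
  have hn0 : (0 : ℝ) < n := by exact_mod_cast hn1
  have key : ∀ (A c' : ℝ), dist (A / n) c' < ε → |A - n * c'| ≤ ε * n := by
    intro A c' hd
    rw [Real.dist_eq] at hd
    have h1 : |A / n - c'| * n ≤ ε * n := by nlinarith [abs_nonneg (A / n - c')]
    calc |A - n * c'| = |A / n - c'| * n := by
          rw [← abs_of_pos hn0, ← abs_mul]
          congr 1
          rw [sub_mul, abs_of_pos hn0, div_mul_cancel₀ _ hn0.ne', mul_comm c']
      _ ≤ ε * n := h1
  exact ⟨key _ _ (hN1 n (le_trans (le_trans (le_max_left _ _) (le_max_right _ _)) hn)),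
    key _ _ (hN2 n (le_trans (le_trans (le_max_right _ _) (le_max_right _ _)) hn))⟩

include hW hI hcW hcI in
lemma term_bound {ε : ℝ} (hε : 0 < ε) (hε2 : ε ≤ (cI - cW) / 4) :
    ∃ N : ℕ, 1 ≤ N ∧ ∀ n, N ≤ n → ∀ m : ℕ,
      Jterm W I (-(n : ℤ)) m ≤
        Real.exp (cW + ε * (4 * n + 1)) * Real.exp (-(cI - cW) / 2) ^ m := by
  obtain ⟨N, hN1, hN⟩ := eps_bound hcW hcI hε
  refine ⟨N, hN1, fun n hn m => ?_⟩
  have hlog := log_Jterm hW hI (W := W) (I := I) n m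
  obtain ⟨hAn, hBn⟩ := hN n hn
  obtain ⟨hAnm1, _⟩ := hN (n + m + 1) (by omega)
  obtain ⟨_, hBnm⟩ := hN (n + m) (by omega)
  have hb : Real.log (Jterm W I (-(n : ℤ)) m) ≤
      cW + ε * (4 * n + 1) + (-(cI - cW) / 2) * m := by
    rw [hlog]
    have e1 : logA W (n + m + 1) ≤ ((n : ℝ) + m + 1) * cW + ε * ((n : ℝ) + m + 1) := by
      have h := (abs_le.1 hAnm1).2
      push_cast at h ⊢
      linarith
    have e2 : -(logA W n) ≤ -((n : ℝ) * cW) + ε * n := by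
      have h := (abs_le.1 hAn).1
      linarith
    have e3 : -(logA I (n + m)) ≤ -(((n : ℝ) + m) * cI) + ε * ((n : ℝ) + m) := by
      have h := (abs_le.1 hBnm).1
      push_cast at h ⊢
      linarith
    have e4 : logA I n ≤ (n : ℝ) * cI + ε * n := by
      have h := (abs_le.1 hBn).2
      linarith
    have hm0 : (0 : ℝ) ≤ m := Nat.cast_nonneg m
    nlinarith [e1, e2, e3, e4, mul_nonneg (sub_nonneg.2 hε2) hm0]
  calc Jterm W I (-(n : ℤ)) m
      = Real.exp (Real.log (Jterm W I (-(n : ℤ)) m)) :=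
        (Real.exp_log (Jterm_pos hW hI _ _)).symm
    _ ≤ Real.exp (cW + ε * (4 * n + 1) + (-(cI - cW) / 2) * m) := Real.exp_le_exp.2 hb
    _ = Real.exp (cW + ε * (4 * n + 1)) * Real.exp (-(cI - cW) / 2) ^ m := by
        rw [Real.exp_add]
        congr 1
        rw [mul_comm, Real.exp_nat_mul]

include hlt in
lemma q_lt_one : Real.exp (-(cI - cW) / 2) < 1 := by
  rw [Real.exp_lt_one_iff]
  linarith

include hW hI hcW hcI hlt in
lemma summable_all : ∀ n : ℕ, Summable (Jterm W I (-(n : ℤ))) := by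
  have hδ : (0 : ℝ) < (cI - cW) / 4 := by linarith
  obtain ⟨N, hN1, hN⟩ := term_bound hW hI hcW hcI (ε := (cI - cW) / 4) hδ le_rfl
  have hbig : ∀ n, N ≤ n → Summable (Jterm W I (-(n : ℤ))) := by
    intro n hn
    exact Summable.of_nonneg_of_le (fun m => (Jterm_pos hW hI _ _).le) (hN n hn)
      (Summable.mul_left _ (summable_geometric_of_lt_one (Real.exp_pos _).le
        (q_lt_one hlt)))
  have hdown : ∀ d n : ℕ, Summable (Jterm W I (-((n + d : ℕ) : ℤ))) →
      Summable (Jterm W I (-(n : ℤ))) := by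
    intro d
    induction d with
    | zero => intro n h; simpa using h
    | succ d ih =>
      intro n h
      have h1 : Summable (Jterm W I (-(((n + 1) + d : ℕ) : ℤ))) := by
        have he : ((n + 1) + d : ℕ) = (n + (d + 1) : ℕ) := by omega
        rw [he]; exact h
      have h2 : Summable (Jterm W I (-(((n + 1) : ℕ) : ℤ))) := ih (n + 1) h1
      have he : -((n : ℤ)) - 1 = -(((n + 1 : ℕ)) : ℤ) := by push_cast; ring
      apply summable_step (k := -(n : ℤ))
      rw [he]
      exact h2
  intro n
  refine hdown (max n N - n) n ?_
  have he : (n + (max n N - n) : ℕ) = max n N := by omega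
  rw [he]
  exact hbig _ (le_max_right _ _)

include hW hI hcW hcI hlt in
lemma Smap_pos : ∀ n : ℕ, 0 < Smap W I (-(n : ℤ)) := by
  intro n
  have hs := summable_all hW hI hcW hcI hlt n
  have h0 : Jterm W I (-(n : ℤ)) 0 ≤ Smap W I (-(n : ℤ)) :=
    Summable.le_tsum hs 0 fun j _ => (Jterm_pos hW hI _ _).le
  exact lt_of_lt_of_le (Jterm_pos hW hI _ _) h0

include hW hI hcW hcI hlt in
lemma Smap_ub {ε : ℝ} (hε : 0 < ε) (hε2 : ε ≤ (cI - cW) / 4) :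
    ∃ N : ℕ, 1 ≤ N ∧ ∀ n, N ≤ n →
      Smap W I (-(n : ℤ)) ≤
        Real.exp (cW + ε * (4 * n + 1)) * (1 - Real.exp (-(cI - cW) / 2))⁻¹ := by
  obtain ⟨N, hN1, hN⟩ := term_bound hW hI hcW hcI hε hε2
  refine ⟨N, hN1, fun n hn => ?_⟩
  have hs := summable_all hW hI hcW hcI hlt n
  have hgeo : Summable (fun m : ℕ => Real.exp (cW + ε * (4 * n + 1)) *
      Real.exp (-(cI - cW) / 2) ^ m) :=
    Summable.mul_left _ (summable_geometric_of_lt_one (Real.exp_pos _).le (q_lt_one hlt))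
  calc Smap W I (-(n : ℤ)) ≤ ∑' m : ℕ, Real.exp (cW + ε * (4 * n + 1)) *
        Real.exp (-(cI - cW) / 2) ^ m := Summable.tsum_le_tsum (hN n hn) hs hgeo
    _ = Real.exp (cW + ε * (4 * n + 1)) * (1 - Real.exp (-(cI - cW) / 2))⁻¹ := by
        rw [tsum_mul_left, tsum_geometric_of_lt_one (Real.exp_pos _).le (q_lt_one hlt)]

include hW hI hcW hcI hlt in
lemma log_Smap_limit :
    Tendsto (fun n : ℕ => Real.log (Smap W I (-(n : ℤ))) / (n : ℝ)) atTop (nhds 0) := by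
  rw [Metric.tendsto_atTop]
  intro ε' hε'
  have hlow : Tendsto (fun n : ℕ => Real.log (W (-(n : ℤ))) / (n : ℝ)) atTop (nhds 0) :=
    cesaro_term_div (fun k => Real.log (W (-(k : ℤ)))) cW hcW
  obtain ⟨N1, hN1⟩ := Metric.tendsto_atTop.1 hlow ε' hε'
  set ε := min (ε' / 8) ((cI - cW) / 4) with hεdef
  have hεpos : 0 < ε := lt_min (by linarith) (by linarith)
  have hεle : ε ≤ (cI - cW) / 4 := min_le_right _ _
  have hεle' : ε ≤ ε' / 8 := min_le_left _ _
  obtain ⟨N2, hN21, hN2⟩ := Smap_ub hW hI hcW hcI hlt hεpos hεle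
  set L : ℝ := Real.log ((1 - Real.exp (-(cI - cW) / 2))⁻¹) with hLdef
  set M : ℝ := |cW| + ε + |L| + 1 with hMdef
  obtain ⟨N3, hN3⟩ := Metric.tendsto_atTop.1 (tendsto_const_div_atTop_nhds_zero_nat M)
    (ε' / 2) (by linarith)
  refine ⟨max N1 (max N2 N3), fun n hn => ?_⟩
  have hnN1 : N1 ≤ n := le_trans (le_max_left _ _) hn
  have hnN2 : N2 ≤ n := le_trans (le_trans (le_max_left _ _) (le_max_right _ _)) hn
  have hnN3 : N3 ≤ n := le_trans (le_trans (le_max_right _ _) (le_max_right _ _)) hn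
  have hn1 : 1 ≤ n := le_trans hN21 hnN2
  have hn0 : (0 : ℝ) < n := by exact_mod_cast hn1
  rw [Real.dist_eq, sub_zero, abs_lt]
  constructor
  · -- lower bound
    have hW' : W (-(n : ℤ)) ≤ Smap W I (-(n : ℤ)) := by
      have h0 : Jterm W I (-(n : ℤ)) 0 ≤ Smap W I (-(n : ℤ)) :=
        Summable.le_tsum (summable_all hW hI hcW hcI hlt n) 0 fun j _ => (Jterm_pos hW hI _ _).le
      simpa [Jterm] using h0
    have hlog2 : Real.log (W (-(n : ℤ))) ≤ Real.log (Smap W I (-(n : ℤ))) :=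
      Real.log_le_log (hW _) hW'
    have hd := hN1 n hnN1
    rw [Real.dist_eq, sub_zero, abs_lt] at hd
    have hdiv : Real.log (W (-(n : ℤ))) / n ≤ Real.log (Smap W I (-(n : ℤ))) / n := by
      gcongr
    linarith [hd.1]
  · -- upper bound
    have hub := hN2 n hnN2
    have hq1 : (0 : ℝ) < 1 - Real.exp (-(cI - cW) / 2) := by
      have hq := q_lt_one (cI := cI) (cW := cW) hlt
      linarith
    have hlog2 : Real.log (Smap W I (-(n : ℤ))) ≤ cW + ε * (4 * n + 1) + L := by
      calc Real.log (Smap W I (-(n : ℤ)))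
          ≤ Real.log (Real.exp (cW + ε * (4 * n + 1)) *
            (1 - Real.exp (-(cI - cW) / 2))⁻¹) :=
            Real.log_le_log (Smap_pos hW hI hcW hcI hlt n) hub
        _ = cW + ε * (4 * n + 1) + L := by
            rw [Real.log_mul (Real.exp_pos _).ne' (inv_pos.2 hq1).ne', Real.log_exp]
    have step : Real.log (Smap W I (-(n : ℤ))) ≤ (cW + ε + L) + 4 * ε * n := by
      nlinarith [hlog2]
    have step2 : Real.log (Smap W I (-(n : ℤ))) / n ≤ ((cW + ε + L) + 4 * ε * n) / n := by
      gcongr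
    have hsplit : ((cW + ε + L) + 4 * ε * (n : ℝ)) / n = (cW + ε + L) / n + 4 * ε := by
      field_simp
    have hM : cW + ε + L ≤ M := by
      have h1 : cW ≤ |cW| := le_abs_self _
      have h2 : L ≤ |L| := le_abs_self _
      rw [hMdef]; linarith
    have hMn := hN3 n hnN3
    rw [Real.dist_eq, sub_zero, abs_lt] at hMn
    calc Real.log (Smap W I (-(n : ℤ))) / n ≤ (cW + ε + L) / n + 4 * ε := by
          rw [← hsplit]; exact step2
      _ ≤ M / n + 4 * ε := by gcongr
      _ < ε' / 2 + 4 * (ε' / 8) := by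
          have h4 : 4 * ε ≤ 4 * (ε' / 8) := by linarith
          linarith [hMn.2]
      _ = ε' := by ring

end Main

end StmtAux

theorem stmt1 (W I : ℤ → ℝ) (cW cI : ℝ)
    (hW : ∀ k, 0 < W k) (hI : ∀ k, 0 < I k)
    (hcW : cesaroLim W cW) (hcI : cesaroLim I cI) (hlt : cW < cI) :
    Filter.Tendsto (fun n : ℕ => Real.log (Smap W I (-(n : ℤ))) / (n : ℝ))
      Filter.atTop (nhds 0) ∧
    cesaroLim (Dmap W I) cI ∧
    cesaroLim (Rmap W I) cW := by
  have hSpos := StmtAux.Smap_pos hW hI hcW hcI hlt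
  have hsum := StmtAux.summable_all hW hI hcW hcI hlt
  have hlim := StmtAux.log_Smap_limit hW hI hcW hcI hlt
  have hcast : ∀ k : ℕ, (-(k : ℤ)) - 1 = -((k + 1 : ℕ) : ℤ) := fun k => by push_cast; ring
  have htail : Tendsto (fun n : ℕ =>
      (Real.log (Smap W I (-((0 : ℕ) : ℤ))) - Real.log (Smap W I (-(n : ℤ)))) / n)
      atTop (nhds 0) := by
    have h1 : Tendsto (fun n : ℕ => Real.log (Smap W I (-((0 : ℕ) : ℤ))) / n) atTop (nhds 0) :=
      tendsto_const_div_atTop_nhds_zero_nat _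
    have h2 := h1.sub hlim
    rw [sub_zero] at h2
    refine h2.congr fun n => ?_
    rw [sub_div]
  have htail' : Tendsto (fun n : ℕ =>
      (Real.log (Smap W I (-(n : ℤ))) - Real.log (Smap W I (-((0 : ℕ) : ℤ)))) / n)
      atTop (nhds 0) := by
    have h2 := htail.neg
    rw [neg_zero] at h2
    refine h2.congr fun n => ?_
    rw [← neg_div]
    ring_nf
  refine ⟨hlim, ?_, ?_⟩
  · -- Dmap
    show Tendsto (fun n : ℕ =>
      (∑ k ∈ Finset.range n, Real.log (Dmap W I (-(k : ℤ)))) / (n : ℝ)) atTop (nhds cI)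
    have hkey : ∀ k : ℕ, Real.log (Dmap W I (-(k : ℤ))) =
        Real.log (I (-(k : ℤ))) + (Real.log (Smap W I (-(k : ℤ)))
          - Real.log (Smap W I (-((k + 1 : ℕ) : ℤ)))) := by
      intro k
      unfold Dmap
      rw [hcast k]
      rw [Real.log_div (mul_pos (hI _) (hSpos k)).ne' (hSpos (k + 1)).ne',
          Real.log_mul (hI _).ne' (hSpos k).ne']
      ring
    have hsum_eq : ∀ n : ℕ, (∑ k ∈ Finset.range n, Real.log (Dmap W I (-(k : ℤ))))
        = (∑ k ∈ Finset.range n, Real.log (I (-(k : ℤ))))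
          + (Real.log (Smap W I (-((0 : ℕ) : ℤ))) - Real.log (Smap W I (-(n : ℤ)))) := by
      intro n
      simp only [hkey]
      rw [Finset.sum_add_distrib]
      congr 1
      exact Finset.sum_range_sub' (fun k => Real.log (Smap W I (-(k : ℤ)))) n
    have hfinal := hcI.add htail
    rw [add_zero] at hfinal
    refine hfinal.congr fun n => ?_
    rw [hsum_eq n, add_div]
  · -- Rmap
    show Tendsto (fun n : ℕ =>
      (∑ k ∈ Finset.range n, Real.log (Rmap W I (-(k : ℤ)))) / (n : ℝ)) atTop (nhds cW)
    have hrec : ∀ k : ℕ, Smap W I (-(k : ℤ)) = W (-(k : ℤ))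
        + (W (-(k : ℤ)) / I (-(k : ℤ))) * Smap W I (-((k + 1 : ℕ) : ℤ)) := by
      intro k
      have h := StmtAux.Smap_rec (W := W) (I := I) (k := -(k : ℤ))
        (by rw [hcast k]; exact hsum (k + 1))
      rwa [hcast k] at h
    have hRkey : ∀ k : ℕ, Rmap W I (-(k : ℤ)) =
        W (-(k : ℤ)) * Smap W I (-((k + 1 : ℕ) : ℤ)) / Smap W I (-(k : ℤ)) := by
      intro k
      unfold Rmap
      rw [hcast k]
      rw [hrec k]
      have hIk := hI (-(k : ℤ))
      have hWk := hW (-(k : ℤ))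
      have hS := hSpos (k + 1)
      have hden : (0 : ℝ) < W (-(k : ℤ)) + W (-(k : ℤ)) / I (-(k : ℤ)) *
          Smap W I (-((k + 1 : ℕ) : ℤ)) := by positivity
      rw [inv_add_inv hIk.ne' hS.ne', inv_div,
          div_eq_div_iff (by positivity) hden.ne']
      field_simp
    have hRlog : ∀ k : ℕ, Real.log (Rmap W I (-(k : ℤ))) =
        Real.log (W (-(k : ℤ))) + (Real.log (Smap W I (-((k + 1 : ℕ) : ℤ)))
          - Real.log (Smap W I (-(k : ℤ)))) := by
      intro k
      rw [hRkey k, Real.log_div (mul_pos (hW _) (hSpos (k + 1))).ne' (hSpos k).ne',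
          Real.log_mul (hW _).ne' (hSpos (k + 1)).ne']
      ring
    have hsum_eq : ∀ n : ℕ, (∑ k ∈ Finset.range n, Real.log (Rmap W I (-(k : ℤ))))
        = (∑ k ∈ Finset.range n, Real.log (W (-(k : ℤ))))
          + (Real.log (Smap W I (-(n : ℤ))) - Real.log (Smap W I (-((0 : ℕ) : ℤ)))) := by
      intro n
      simp only [hRlog]
      rw [Finset.sum_add_distrib]
      congr 1
      exact Finset.sum_range_sub (fun k => Real.log (Smap W I (-(k : ℤ)))) n
    have hfinal := hcW.add htail'
    rw [add_zero] at hfinal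
    refine hfinal.congr fun n => ?_
    rw [hsum_eq n, add_div]
end
end

section
/- (Intertwining identity for a single step.) Let (W¹, I¹, I²) be a triple of positive sequences with 𝔠(W¹) < 𝔠(I¹) < 𝔠(I²), and set W² = R(W¹, I¹). Then the two ways of iterating the update map agree: D(W¹, D(I¹, I²)) = D( D(W¹,I¹), D(W²,I²) ). -/
open Filter Topology

noncomputable section

namespace IPaux

variable {W I X : ℤ → ℝ}

lemma jterm_pos (hW : ∀ k, 0 < W k) (hI : ∀ k, 0 < I k) (k : ℤ) (m : ℕ) :
    0 < Jterm W I k m :=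
  mul_pos (hW _) (Finset.prod_pos fun _ _ => div_pos (hW _) (hI _))

lemma jterm_succ (W I : ℤ → ℝ) (i : ℤ) (m : ℕ) :
    Jterm W I i (m + 1) = (W i / I i) * Jterm W I (i - 1) m := by
  rw [Jterm, Jterm, Finset.prod_range_succ' (fun r : ℕ => W (i - (r : ℤ)) / I (i - (r : ℤ))) m]
  have e1 : ∀ r : ℕ, i - ((r : ℤ) + 1) = i - 1 - (r : ℤ) := fun r => by ring
  have e2 : ∀ x ∈ Finset.range m,
      W (i - ((x + 1 : ℕ) : ℤ)) / I (i - ((x + 1 : ℕ) : ℤ))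
        = W (i - 1 - (x : ℤ)) / I (i - 1 - (x : ℤ)) := by
    intro x _
    push_cast
    rw [e1 x]
  rw [Finset.prod_congr rfl e2]
  have e3 : i - ((m + 1 : ℕ) : ℤ) = i - 1 - (m : ℤ) := by push_cast; ring
  have e4 : i - ((0 : ℕ) : ℤ) = i := by simp
  rw [e3, e4]
  ring

/-- partial sums of logs going left from `k`. -/
def Slog (X : ℤ → ℝ) (k : ℤ) (n : ℕ) : ℝ := ∑ r ∈ Finset.range n, Real.log (X (k - (r : ℤ)))

lemma slog_single (X : ℤ → ℝ) (k : ℤ) (t : ℕ) :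
    Real.log (X (k - (t : ℤ))) = Slog X k (t + 1) - Slog X k t := by
  simp [Slog, Finset.sum_range_succ]

lemma slog_diff (X : ℤ → ℝ) (k : ℤ) (n m : ℕ) :
    ∑ r ∈ Finset.range m, Real.log (X (k - (n : ℤ) - (r : ℤ))) = Slog X k (n + m) - Slog X k n := by
  rw [Slog, Slog, Finset.sum_range_add, add_sub_cancel_left]
  refine Finset.sum_congr rfl fun r _ => ?_
  congr 2
  push_cast
  ring

lemma slog_succ' (X : ℤ → ℝ) (k : ℤ) (n : ℕ) :
    Slog X k (n + 1) = Real.log (X k) + Slog X (k - 1) n := by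
  rw [Slog, Finset.sum_range_succ' (fun r : ℕ => Real.log (X (k - (r : ℤ)))) n, add_comm]
  congr 1
  · simp
  · refine Finset.sum_congr rfl fun r _ => ?_
    congr 2
    push_cast
    ring

/-- Linear approximation of the log partial sums with sublinear error. -/
def LA (X : ℤ → ℝ) (c : ℝ) (k : ℤ) : Prop :=
  ∀ ε > 0, ∃ C, 0 ≤ C ∧ ∀ n : ℕ, |Slog X k n - c * n| ≤ C + ε * n

lemma la_zero {c : ℝ} (h : cesaroLim X c) : LA X c 0 := by
  intro ε hε
  obtain ⟨N, hN⟩ := Metric.tendsto_atTop.mp h ε hε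
  refine ⟨∑ i ∈ Finset.range (N + 1), |Slog X 0 i - c * i|,
    Finset.sum_nonneg fun _ _ => abs_nonneg _, fun n => ?_⟩
  have hεn : 0 ≤ ε * n := by positivity
  rcases lt_or_ge n (N + 1) with hn | hn
  · have h1 : |Slog X 0 n - c * n| ≤ ∑ i ∈ Finset.range (N + 1), |Slog X 0 i - c * i| :=
      Finset.single_le_sum (f := fun i : ℕ => |Slog X 0 i - c * (i : ℝ)|)
        (fun _ _ => abs_nonneg _) (Finset.mem_range.mpr hn)
    linarith
  · have hn0 : 0 < (n : ℝ) := by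
      have : 0 < n := by omega
      exact_mod_cast this
    have h2 := hN n (by omega)
    rw [Real.dist_eq] at h2
    have e1 : (∑ r ∈ Finset.range n, Real.log (X (-(r : ℤ)))) = Slog X 0 n := by
      refine Finset.sum_congr rfl fun r _ => ?_
      rw [zero_sub]
    rw [e1] at h2
    have h3 : Slog X 0 n / n - c = (Slog X 0 n - c * n) / n := by field_simp
    rw [h3, abs_div, abs_of_pos hn0, div_lt_iff₀ hn0] at h2
    have hC : 0 ≤ ∑ i ∈ Finset.range (N + 1), |Slog X 0 i - c * i| :=
      Finset.sum_nonneg fun _ _ => abs_nonneg _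
    nlinarith

lemma la_pred {c : ℝ} {k : ℤ} (h : LA X c k) : LA X c (k - 1) := by
  intro ε hε
  obtain ⟨C, hC0, hC⟩ := h ε hε
  refine ⟨C + ε + |Real.log (X k)| + |c|, by positivity, fun n => ?_⟩
  have h1 := hC (n + 1)
  rw [slog_succ' X k n] at h1
  have t1 := abs_le.mp h1
  rw [abs_le]
  push_cast at t1 ⊢
  constructor
  · nlinarith [le_abs_self (Real.log (X k)), neg_abs_le (Real.log (X k)),
      le_abs_self c, neg_abs_le c]
  · nlinarith [le_abs_self (Real.log (X k)), neg_abs_le (Real.log (X k)),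
      le_abs_self c, neg_abs_le c]

lemma la_succ {c : ℝ} {k : ℤ} (h : LA X c k) : LA X c (k + 1) := by
  intro ε hε
  obtain ⟨C, hC0, hC⟩ := h ε hε
  refine ⟨C + |Real.log (X (k + 1))| + |c|, by positivity, fun n => ?_⟩
  cases n with
  | zero =>
    simp only [Slog, Finset.range_zero, Finset.sum_empty, Nat.cast_zero, mul_zero, sub_zero,
      abs_zero]
    positivity
  | succ m =>
    have h2 : Slog X (k + 1) (m + 1) = Real.log (X (k + 1)) + Slog X k m := by
      have := slog_succ' X (k + 1) m
      rw [add_sub_cancel_right] at this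
      exact this
    have t1 := abs_le.mp (hC m)
    rw [h2, abs_le]
    push_cast at t1 ⊢
    constructor
    · nlinarith [le_abs_self (Real.log (X (k + 1))), neg_abs_le (Real.log (X (k + 1))),
        le_abs_self c, neg_abs_le c]
    · nlinarith [le_abs_self (Real.log (X (k + 1))), neg_abs_le (Real.log (X (k + 1))),
        le_abs_self c, neg_abs_le c]

lemma la_all {c : ℝ} (h : cesaroLim X c) : ∀ k : ℤ, LA X c k := by
  intro k
  induction k using Int.induction_on with
  | zero => exact la_zero h
  | succ i ih => exact la_succ ih
  | pred i ih =>
    exact la_pred ih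

/-- two-sided sublinear bound on `log F` along the left tail of `k`. -/
def SL (F : ℤ → ℝ) (k : ℤ) : Prop :=
  ∀ ε > 0, ∃ C, 0 ≤ C ∧ ∀ t : ℕ, |Real.log (F (k - (t : ℤ)))| ≤ C + ε * t

lemma sl_of_la {c : ℝ} {k : ℤ} (h : LA X c k) : SL X k := by
  intro ε hε
  obtain ⟨C, hC0, hC⟩ := h (ε / 2) (by positivity)
  refine ⟨2 * C + |c| + ε, by positivity, fun t => ?_⟩
  rw [slog_single]
  have h1 := abs_le.mp (hC (t + 1))
  have h2 := abs_le.mp (hC t)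
  rw [abs_le]
  push_cast at h1 h2 ⊢
  constructor
  · nlinarith [le_abs_self c, neg_abs_le c]
  · nlinarith [le_abs_self c, neg_abs_le c]

lemma sl_combine {F : ℤ → ℝ} {k : ℤ}
    (hup : ∀ ε > 0, ∃ C, ∀ t : ℕ, Real.log (F (k - (t : ℤ))) ≤ C + ε * t)
    (hlo : ∀ ε > 0, ∃ C, ∀ t : ℕ, -(C + ε * t) ≤ Real.log (F (k - (t : ℤ)))) : SL F k := by
  intro ε hε
  obtain ⟨C1, h1⟩ := hup ε hε
  obtain ⟨C2, h2⟩ := hlo ε hε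
  refine ⟨max (max C1 C2) 0, le_max_right _ _, fun t => ?_⟩
  rw [abs_le]
  constructor
  · have := h2 t
    have m1 : C2 ≤ max (max C1 C2) 0 := le_trans (le_max_right C1 C2) (le_max_left _ _)
    linarith
  · have := h1 t
    have m1 : C1 ≤ max (max C1 C2) 0 := le_trans (le_max_left C1 C2) (le_max_left _ _)
    linarith

lemma summable_of_log_le {a : ℕ → ℝ} (ha : ∀ m, 0 < a m) {C δ : ℝ} (hδ : 0 < δ)
    (h : ∀ m : ℕ, Real.log (a m) ≤ C - δ * m) : Summable a := by
  have key : ∀ m : ℕ, a m ≤ Real.exp C * Real.exp (-δ) ^ m := by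
    intro m
    have h2 : C - δ * m = C + (m : ℝ) * (-δ) := by ring
    calc a m = Real.exp (Real.log (a m)) := (Real.exp_log (ha m)).symm
      _ ≤ Real.exp (C - δ * m) := Real.exp_le_exp.mpr (h m)
      _ = Real.exp C * Real.exp (-δ) ^ m := by
          rw [h2, Real.exp_add, Real.exp_nat_mul]
  refine Summable.of_nonneg_of_le (fun m => (ha m).le) key ?_
  exact (summable_geometric_of_lt_one (Real.exp_nonneg _)
    (Real.exp_lt_one_iff.mpr (by linarith))).mul_left _

lemma log_tsum_le {a : ℕ → ℝ} (ha : ∀ m, 0 < a m) {C δ : ℝ} (hδ : 0 < δ)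
    (h : ∀ m : ℕ, Real.log (a m) ≤ C - δ * m) :
    Real.log (∑' m, a m) ≤ C + Real.log (1 - Real.exp (-δ))⁻¹ := by
  have hr0 : (0 : ℝ) ≤ Real.exp (-δ) := Real.exp_nonneg _
  have hr1 : Real.exp (-δ) < 1 := Real.exp_lt_one_iff.mpr (by linarith)
  have hr2 : 0 < 1 - Real.exp (-δ) := by linarith
  have key : ∀ m : ℕ, a m ≤ Real.exp C * Real.exp (-δ) ^ m := by
    intro m
    have h2 : C - δ * m = C + (m : ℝ) * (-δ) := by ring
    calc a m = Real.exp (Real.log (a m)) := (Real.exp_log (ha m)).symm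
      _ ≤ Real.exp (C - δ * m) := Real.exp_le_exp.mpr (h m)
      _ = Real.exp C * Real.exp (-δ) ^ m := by rw [h2, Real.exp_add, Real.exp_nat_mul]
  have hsum := summable_of_log_le ha hδ h
  have hgeo : Summable (fun m : ℕ => Real.exp C * Real.exp (-δ) ^ m) :=
    (summable_geometric_of_lt_one hr0 hr1).mul_left _
  have hle : (∑' m, a m) ≤ Real.exp C * (1 - Real.exp (-δ))⁻¹ := by
    have := Summable.tsum_le_tsum key hsum hgeo
    rwa [Summable.tsum_mul_left _ (summable_geometric_of_lt_one hr0 hr1),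
      tsum_geometric_of_lt_one hr0 hr1] at this
  have hpos : 0 < ∑' m, a m := Summable.tsum_pos hsum (fun m => (ha m).le) 0 (ha 0)
  calc Real.log (∑' m, a m) ≤ Real.log (Real.exp C * (1 - Real.exp (-δ))⁻¹) :=
        Real.log_le_log hpos hle
    _ = C + Real.log (1 - Real.exp (-δ))⁻¹ := by
        rw [Real.log_mul (Real.exp_ne_zero _) (by positivity), Real.log_exp]

lemma master {b : ℕ → ℕ → ℝ} (hb : ∀ n m, 0 < b n m) {δ : ℝ} (hδ : 0 < δ)
    (H : ∀ ε > 0, ∃ C, ∀ n m : ℕ, Real.log (b n m) ≤ C + ε * n - (δ - ε) * m) :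
    (∀ n, Summable (b n)) ∧ (∀ ε > 0, ∃ C, ∀ n : ℕ, Real.log (∑' m, b n m) ≤ C + ε * n) := by
  constructor
  · intro n
    obtain ⟨C, hC⟩ := H (δ / 2) (by positivity)
    refine summable_of_log_le (hb n) (half_pos hδ) (C := C + δ / 2 * n) fun m => ?_
    have := hC n m
    nlinarith [(by positivity : (0:ℝ) ≤ (m:ℝ))]
  · intro ε hε
    have hε'0 : 0 < min ε (δ / 2) := lt_min hε (by positivity)
    obtain ⟨C, hC⟩ := H (min ε (δ / 2)) hε'0
    refine ⟨C + Real.log (1 - Real.exp (-(δ / 2)))⁻¹, fun n => ?_⟩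
    have h2 : ∀ m : ℕ, Real.log (b n m) ≤ (C + min ε (δ / 2) * n) - δ / 2 * m := by
      intro m
      have h3 := hC n m
      have h4 : min ε (δ / 2) ≤ δ / 2 := min_le_right _ _
      nlinarith [(by positivity : (0:ℝ) ≤ (m:ℝ))]
    have h5 := log_tsum_le (hb n) (half_pos hδ) h2
    have h6 : min ε (δ / 2) * n ≤ ε * n := by
      have := min_le_left ε (δ / 2)
      nlinarith [(by positivity : (0:ℝ) ≤ (n:ℝ))]
    linarith

lemma log_jterm (hW : ∀ i, 0 < W i) (hI : ∀ i, 0 < I i) (k : ℤ) (n m : ℕ) :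
    Real.log (Jterm W I (k - (n : ℤ)) m)
      = (Slog W k (n + m + 1) - Slog W k (n + m))
        + ((Slog W k (n + m) - Slog W k n) - (Slog I k (n + m) - Slog I k n)) := by
  rw [Jterm, Real.log_mul (ne_of_gt (hW _))
    (ne_of_gt (Finset.prod_pos fun _ _ => div_pos (hW _) (hI _))),
    Real.log_prod (fun r _ => ne_of_gt (div_pos (hW _) (hI _)))]
  have e1 : (∑ r ∈ Finset.range m, Real.log (W (k - (n : ℤ) - (r : ℤ)) / I (k - (n : ℤ) - (r : ℤ))))
      = (∑ r ∈ Finset.range m, Real.log (W (k - (n : ℤ) - (r : ℤ))))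
        - ∑ r ∈ Finset.range m, Real.log (I (k - (n : ℤ) - (r : ℤ))) := by
    rw [← Finset.sum_sub_distrib]
    exact Finset.sum_congr rfl fun r _ => Real.log_div (ne_of_gt (hW _)) (ne_of_gt (hI _))
  rw [e1, slog_diff W k n m, slog_diff I k n m]
  have e2 : k - (n : ℤ) - (m : ℤ) = k - ((n + m : ℕ) : ℤ) := by push_cast; ring
  rw [e2, slog_single W k (n + m)]

lemma H_gen {cW cI : ℝ} (hW : ∀ i, 0 < W i) (hI : ∀ i, 0 < I i) {k : ℤ}
    (hlW : LA W cW k) (hlI : LA I cI k)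
    {φ : ℕ → ℕ → ℝ}
    (hφ : ∀ ε > 0, ∃ C, 0 ≤ C ∧ ∀ n m : ℕ, |φ n m| ≤ C + ε * (n + m + 1))
    {b : ℕ → ℕ → ℝ}
    (hb : ∀ n m : ℕ, Real.log (b n m) = Real.log (Jterm W I (k - (n : ℤ)) m) + φ n m) :
    ∀ ε > 0, ∃ C, ∀ n m : ℕ, Real.log (b n m) ≤ C + ε * n - ((cI - cW) - ε) * m := by
  intro ε hε
  obtain ⟨CW, hCW0, hCW⟩ := hlW (ε / 8) (by positivity)
  obtain ⟨CI, hCI0, hCI⟩ := hlI (ε / 8) (by positivity)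
  obtain ⟨CP, hCP0, hCP⟩ := hφ (ε / 8) (by positivity)
  refine ⟨2 * CW + 2 * CI + CP + |cW| + ε, fun n m => ?_⟩
  rw [hb, log_jterm hW hI]
  obtain ⟨h1a, h1b⟩ := abs_le.mp (hCW (n + m + 1))
  obtain ⟨h2a, h2b⟩ := abs_le.mp (hCW n)
  obtain ⟨h3a, h3b⟩ := abs_le.mp (hCI (n + m))
  obtain ⟨h4a, h4b⟩ := abs_le.mp (hCI n)
  obtain ⟨h5a, h5b⟩ := abs_le.mp (hCP n m)
  have h6 := le_abs_self cW
  have hm : (0 : ℝ) ≤ ε * m := by positivity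
  have hn : (0 : ℝ) ≤ ε * n := by positivity
  push_cast at h1a h1b h2a h2b h3a h3b h4a h4b h5a h5b ⊢
  linarith

lemma prod_telescope {F : ℤ → ℝ} (hF : ∀ i, F i ≠ 0) (i : ℤ) :
    ∀ m : ℕ, ∏ r ∈ Finset.range m, (F (i - (r : ℤ)) / F (i - (r : ℤ) - 1)) = F i / F (i - (m : ℤ))
  | 0 => by simp [div_self (hF i)]
  | (m + 1) => by
      rw [Finset.prod_range_succ, prod_telescope hF i m,
        show i - ((m + 1 : ℕ) : ℤ) = i - (m : ℤ) - 1 from by push_cast; ring]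
      field_simp [hF (i - (m : ℤ)), hF (i - (m : ℤ) - 1)]

lemma prod_telescope' {F : ℤ → ℝ} (hF : ∀ i, F i ≠ 0) (i : ℤ) :
    ∀ m : ℕ, ∏ r ∈ Finset.range m, (F (i - (r : ℤ) - 1) / F (i - (r : ℤ))) = F (i - (m : ℤ)) / F i
  | 0 => by simp [div_self (hF i)]
  | (m + 1) => by
      rw [Finset.prod_range_succ, prod_telescope' hF i m,
        show i - ((m + 1 : ℕ) : ℤ) = i - (m : ℤ) - 1 from by push_cast; ring]
      field_simp [hF (i - (m : ℤ)), hF (i - (m : ℤ) - 1), hF i]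

lemma jterm_num_up {G g Y F : ℤ → ℝ} (hF : ∀ i, F i ≠ 0)
    (hG : ∀ i, G i = g i * (F i / F (i - 1))) (i : ℤ) (m : ℕ) :
    Jterm G Y i m = Jterm g Y i m * (F i / F (i - (m : ℤ) - 1)) := by
  rw [Jterm, Jterm]
  have e1 : ∀ r ∈ Finset.range m, G (i - (r : ℤ)) / Y (i - (r : ℤ))
      = (g (i - (r : ℤ)) / Y (i - (r : ℤ))) * (F (i - (r : ℤ)) / F (i - (r : ℤ) - 1)) := by
    intro r _
    rw [hG]
    ring
  rw [Finset.prod_congr rfl e1, Finset.prod_mul_distrib, prod_telescope hF i m, hG (i - (m : ℤ))]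
  have hx := hF (i - (m : ℤ))
  have hy := hF (i - (m : ℤ) - 1)
  set x := F (i - (m : ℤ))
  set y := F (i - (m : ℤ) - 1)
  set z := F i
  set a := g (i - (m : ℤ))
  set Q := ∏ r ∈ Finset.range m, (g (i - (r : ℤ)) / Y (i - (r : ℤ)))
  field_simp

lemma jterm_num_down {G g Y F : ℤ → ℝ} (hF : ∀ i, F i ≠ 0)
    (hG : ∀ i, G i = g i * (F (i - 1) / F i)) (i : ℤ) (m : ℕ) :
    Jterm G Y i m = Jterm g Y i m * (F (i - (m : ℤ) - 1) / F i) := by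
  rw [Jterm, Jterm]
  have e1 : ∀ r ∈ Finset.range m, G (i - (r : ℤ)) / Y (i - (r : ℤ))
      = (g (i - (r : ℤ)) / Y (i - (r : ℤ))) * (F (i - (r : ℤ) - 1) / F (i - (r : ℤ))) := by
    intro r _
    rw [hG]
    ring
  rw [Finset.prod_congr rfl e1, Finset.prod_mul_distrib, prod_telescope' hF i m, hG (i - (m : ℤ))]
  have hx := hF (i - (m : ℤ))
  have hz := hF i
  set x := F (i - (m : ℤ))
  set y := F (i - (m : ℤ) - 1)
  set z := F i
  set a := g (i - (m : ℤ))
  set Q := ∏ r ∈ Finset.range m, (g (i - (r : ℤ)) / Y (i - (r : ℤ)))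
  field_simp

lemma jterm_den {G g X F : ℤ → ℝ} (hF : ∀ i, F i ≠ 0) (hgne : ∀ i, g i ≠ 0)
    (hG : ∀ i, G i = g i * (F i / F (i - 1))) (i : ℤ) (m : ℕ) :
    Jterm X G i m = Jterm X g i m * (F (i - (m : ℤ)) / F i) := by
  rw [Jterm, Jterm]
  have e1 : ∀ r ∈ Finset.range m, X (i - (r : ℤ)) / G (i - (r : ℤ))
      = (X (i - (r : ℤ)) / g (i - (r : ℤ))) * (F (i - (r : ℤ) - 1) / F (i - (r : ℤ))) := by
    intro r _
    rw [hG]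
    have hx := hF (i - (r : ℤ))
    have hy := hF (i - (r : ℤ) - 1)
    have hv := hgne (i - (r : ℤ))
    set u := X (i - (r : ℤ))
    set v := g (i - (r : ℤ))
    set x := F (i - (r : ℤ))
    set y := F (i - (r : ℤ) - 1)
    field_simp
  rw [Finset.prod_congr rfl e1, Finset.prod_mul_distrib, prod_telescope' hF i m]
  ring

lemma pure_term {X Y D : ℤ → ℝ} (hD : ∀ i, D i ≠ 0) (k : ℤ) {p m : ℕ} (hm : m ≤ p) :
    Jterm X D k m * Jterm Y D (k - (m : ℤ)) (p - m)
      = (∏ r ∈ Finset.range (m + 1), X (k - (r : ℤ)))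
          * (∏ s ∈ Finset.range (p - m + 1), Y (k - (m : ℤ) - (s : ℤ)))
          / ∏ r ∈ Finset.range p, D (k - (r : ℤ)) := by
  have hsplit : (∏ r ∈ Finset.range p, D (k - (r : ℤ)))
      = (∏ r ∈ Finset.range m, D (k - (r : ℤ)))
        * ∏ s ∈ Finset.range (p - m), D (k - (m : ℤ) - (s : ℤ)) := by
    have h := Finset.prod_range_add (fun r : ℕ => D (k - (r : ℤ))) m (p - m)
    rw [show m + (p - m) = p from by omega] at h
    rw [h]
    congr 1
    refine Finset.prod_congr rfl fun s _ => ?_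
    congr 1
    push_cast
    ring
  rw [Jterm, Jterm, Finset.prod_div_distrib, Finset.prod_div_distrib, hsplit,
    Finset.prod_range_succ, Finset.prod_range_succ]
  have h1 : (∏ r ∈ Finset.range m, D (k - (r : ℤ))) ≠ 0 :=
    Finset.prod_ne_zero_iff.mpr fun _ _ => hD _
  have h2 : (∏ s ∈ Finset.range (p - m), D (k - (m : ℤ) - (s : ℤ))) ≠ 0 :=
    Finset.prod_ne_zero_iff.mpr fun _ _ => hD _
  field_simp

lemma CFL {W I J : ℤ → ℝ}
    (hrec : ∀ i, I i * J i = W i * I i + W i * J (i - 1)) (k : ℤ) :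
    ∀ p : ℕ, (∑ m ∈ Finset.range (p + 1),
        (∏ r ∈ Finset.range (m + 1), W (k - (r : ℤ)))
          * (∏ s ∈ Finset.range (p - m + 1), I (k - (m : ℤ) - (s : ℤ))))
      = (∏ s ∈ Finset.range (p + 1), I (k - (s : ℤ))) * J k
        - (∏ r ∈ Finset.range (p + 1), W (k - (r : ℤ))) * J (k - (p : ℤ) - 1)
  | 0 => by
      simp only [Finset.sum_range_one, Finset.prod_range_one, Nat.cast_zero, sub_zero,
        Nat.sub_zero, zero_add]
      linarith [hrec k]
  | (p + 1) => by
      have IH := CFL hrec k p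
      rw [Finset.sum_range_succ]
      have e1 : ∀ m ∈ Finset.range (p + 1),
          (∏ r ∈ Finset.range (m + 1), W (k - (r : ℤ)))
            * (∏ s ∈ Finset.range (p + 1 - m + 1), I (k - (m : ℤ) - (s : ℤ)))
          = ((∏ r ∈ Finset.range (m + 1), W (k - (r : ℤ)))
            * (∏ s ∈ Finset.range (p - m + 1), I (k - (m : ℤ) - (s : ℤ)))) * I (k - (p : ℤ) - 1) := by
        intro m hm
        have hm' : m ≤ p := Nat.lt_succ_iff.mp (Finset.mem_range.mp hm)
        rw [show p + 1 - m + 1 = (p - m + 1) + 1 from by omega,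
          Finset.prod_range_succ (fun s : ℕ => I (k - (m : ℤ) - (s : ℤ))) (p - m + 1),
          show k - (m : ℤ) - ((p - m + 1 : ℕ) : ℤ) = k - (p : ℤ) - 1 from by omega]
        ring
      rw [Finset.sum_congr rfl e1, ← Finset.sum_mul, IH]
      rw [show p + 1 - (p + 1) + 1 = 1 from by omega, Finset.prod_range_one,
        show k - ((p + 1 : ℕ) : ℤ) - ((0 : ℕ) : ℤ) = k - (p : ℤ) - 1 from by push_cast; ring]
      have ha : (∏ r ∈ Finset.range (p + 1 + 1), W (k - (r : ℤ)))
          = (∏ r ∈ Finset.range (p + 1), W (k - (r : ℤ))) * W (k - (p : ℤ) - 1) := by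
        rw [Finset.prod_range_succ, show k - ((p + 1 : ℕ) : ℤ) = k - (p : ℤ) - 1 from by
          push_cast; ring]
      have hB : (∏ s ∈ Finset.range (p + 1 + 1), I (k - (s : ℤ)))
          = (∏ s ∈ Finset.range (p + 1), I (k - (s : ℤ))) * I (k - (p : ℤ) - 1) := by
        rw [Finset.prod_range_succ, show k - ((p + 1 : ℕ) : ℤ) = k - (p : ℤ) - 1 from by
          push_cast; ring]
      have hJ2 : J (k - ((p + 1 : ℕ) : ℤ) - 1) = J (k - (p : ℤ) - 2) := by
        congr 1
        push_cast
        ring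
      rw [ha, hB, hJ2]
      have hq := hrec (k - (p : ℤ) - 1)
      rw [show k - (p : ℤ) - 1 - 1 = k - (p : ℤ) - 2 from by ring] at hq
      linear_combination (-(∏ r ∈ Finset.range (p + 1), W (k - (r : ℤ)))) * hq

lemma CFR {W I J : ℤ → ℝ} (hJ : ∀ i, J i ≠ 0)
    (hrec : ∀ i, I i * J i = W i * I i + W i * J (i - 1)) (k : ℤ) :
    ∀ p : ℕ, (∑ m ∈ Finset.range (p + 1),
        ((∏ r ∈ Finset.range (m + 1), I (k - (r : ℤ))) * (J k / J (k - (m : ℤ) - 1)))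
          * ((∏ s ∈ Finset.range (p - m + 1), W (k - (m : ℤ) - (s : ℤ)))
            * (J (k - (p : ℤ) - 1) / J (k - (m : ℤ)))))
      = (∏ s ∈ Finset.range (p + 1), I (k - (s : ℤ))) * J k
        - (∏ r ∈ Finset.range (p + 1), W (k - (r : ℤ))) * J (k - (p : ℤ) - 1)
  | 0 => by
      simp only [Finset.sum_range_one, Finset.prod_range_one, Nat.cast_zero, sub_zero,
        Nat.sub_zero, zero_add]
      have h1 := hJ k
      have h2 := hJ (k - 1)
      have hq := hrec k
      field_simp
      linear_combination (-1 : ℝ) * hq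
  | (p + 1) => by
      have IH := CFR hJ hrec k p
      rw [Finset.sum_range_succ]
      have e1 : ∀ m ∈ Finset.range (p + 1),
          ((∏ r ∈ Finset.range (m + 1), I (k - (r : ℤ))) * (J k / J (k - (m : ℤ) - 1)))
            * ((∏ s ∈ Finset.range (p + 1 - m + 1), W (k - (m : ℤ) - (s : ℤ)))
              * (J (k - ((p + 1 : ℕ) : ℤ) - 1) / J (k - (m : ℤ))))
          = (((∏ r ∈ Finset.range (m + 1), I (k - (r : ℤ))) * (J k / J (k - (m : ℤ) - 1)))
            * ((∏ s ∈ Finset.range (p - m + 1), W (k - (m : ℤ) - (s : ℤ)))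
              * (J (k - (p : ℤ) - 1) / J (k - (m : ℤ)))))
            * (W (k - (p : ℤ) - 1) * (J (k - (p : ℤ) - 2) / J (k - (p : ℤ) - 1))) := by
        intro m hm
        have hm' : m ≤ p := Nat.lt_succ_iff.mp (Finset.mem_range.mp hm)
        rw [show p + 1 - m + 1 = (p - m + 1) + 1 from by omega,
          Finset.prod_range_succ (fun s : ℕ => W (k - (m : ℤ) - (s : ℤ))) (p - m + 1),
          show k - (m : ℤ) - ((p - m + 1 : ℕ) : ℤ) = k - (p : ℤ) - 1 from by omega,
          show k - ((p + 1 : ℕ) : ℤ) - 1 = k - (p : ℤ) - 2 from by push_cast; ring]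
        field_simp [hJ (k - (m : ℤ)), hJ (k - (m : ℤ) - 1), hJ (k - (p : ℤ) - 1)]
      rw [Finset.sum_congr rfl e1, ← Finset.sum_mul, IH]
      rw [show p + 1 - (p + 1) + 1 = 1 from by omega, Finset.prod_range_one,
        show k - ((p + 1 : ℕ) : ℤ) - ((0 : ℕ) : ℤ) = k - (p : ℤ) - 1 from by push_cast; ring]
      have ha : (∏ r ∈ Finset.range (p + 1 + 1), W (k - (r : ℤ)))
          = (∏ r ∈ Finset.range (p + 1), W (k - (r : ℤ))) * W (k - (p : ℤ) - 1) := by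
        rw [Finset.prod_range_succ, show k - ((p + 1 : ℕ) : ℤ) = k - (p : ℤ) - 1 from by
          push_cast; ring]
      have hB : (∏ s ∈ Finset.range (p + 1 + 1), I (k - (s : ℤ)))
          = (∏ s ∈ Finset.range (p + 1), I (k - (s : ℤ))) * I (k - (p : ℤ) - 1) := by
        rw [Finset.prod_range_succ, show k - ((p + 1 : ℕ) : ℤ) = k - (p : ℤ) - 1 from by
          push_cast; ring]
      have hJ2 : J (k - ((p + 1 : ℕ) : ℤ) - 1) = J (k - (p : ℤ) - 2) := by
        congr 1
        push_cast
        ring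
      have hJ3 : J (k - ((p + 1 : ℕ) : ℤ)) = J (k - (p : ℤ) - 1) := by
        congr 1
        push_cast
        ring
      rw [ha, hB, hJ2, hJ3]
      have hq := hrec (k - (p : ℤ) - 1)
      rw [show k - (p : ℤ) - 1 - 1 = k - (p : ℤ) - 2 from by ring] at hq
      have h1 := hJ (k - (p : ℤ) - 1)
      have h2 := hJ (k - (p : ℤ) - 2)
      field_simp
      linear_combination (-((∏ s ∈ Finset.range (p + 1), I (k - (s : ℤ))) * J k)) * hq

def diagEquiv : (Σ p : ℕ, Fin (p + 1)) ≃ ℕ × ℕ where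
  toFun x := (x.2.1, x.1 - x.2.1)
  invFun q := ⟨q.1 + q.2, ⟨q.1, by omega⟩⟩
  left_inv := by
    rintro ⟨p, m, hm⟩
    have h1 : m ≤ p := by omega
    obtain ⟨d, rfl⟩ : ∃ d, p = m + d := ⟨p - m, by omega⟩
    dsimp only
    refine Sigma.ext (by dsimp only; omega) ?_
    exact (Fin.heq_ext_iff (by dsimp only; omega)).mpr rfl
  right_inv := by
    rintro ⟨a, b⟩
    simp [Nat.add_sub_cancel_left]

lemma tsum_diag {f : ℕ → ℕ → ℝ} (hf : Summable fun q : ℕ × ℕ => f q.1 q.2) :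
    (∑' q : ℕ × ℕ, f q.1 q.2) = ∑' p : ℕ, ∑ m ∈ Finset.range (p + 1), f m (p - m) := by
  calc (∑' q : ℕ × ℕ, f q.1 q.2)
      = ∑' x : Σ p : ℕ, Fin (p + 1), f (diagEquiv x).1 (diagEquiv x).2 :=
        (diagEquiv.tsum_eq (fun q : ℕ × ℕ => f q.1 q.2)).symm
    _ = ∑' p : ℕ, ∑' c : Fin (p + 1), f (diagEquiv ⟨p, c⟩).1 (diagEquiv ⟨p, c⟩).2 :=
        Summable.tsum_sigma' (fun _ => Summable.of_finite) (diagEquiv.summable_iff.mpr hf)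
    _ = ∑' p : ℕ, ∑ m ∈ Finset.range (p + 1), f m (p - m) := by
        refine tsum_congr fun p => ?_
        rw [tsum_fintype]
        exact Fin.sum_univ_eq_sum_range (fun m => f m (p - m)) (p + 1)

lemma smap_rec {W I : ℤ → ℝ} (hs : ∀ i, Summable (Jterm W I i)) (i : ℤ) :
    Smap W I i = W i + (W i / I i) * Smap W I (i - 1) := by
  rw [Smap, Summable.tsum_eq_zero_add (hs i)]
  congr 1
  · simp [Jterm]
  · rw [Smap, ← Summable.tsum_mul_left _ (hs (i - 1))]
    exact tsum_congr fun m => jterm_succ W I i m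

lemma smap_lower {W I : ℤ → ℝ} (hW : ∀ i, 0 < W i) (hI : ∀ i, 0 < I i)
    (hs : ∀ i, Summable (Jterm W I i)) (i : ℤ) : W i ≤ Smap W I i := by
  have h0 : Jterm W I i 0 = W i := by simp [Jterm]
  have h := Summable.le_tsum (hs i) 0 (fun j _ => (jterm_pos hW hI i j).le)
  rwa [h0] at h

end IPaux

set_option maxHeartbeats 2000000 in
theorem stmt7 (W1 I1 I2 : ℤ → ℝ) (c0 c1 c2 : ℝ)
    (hW1 : ∀ k, 0 < W1 k) (hI1 : ∀ k, 0 < I1 k) (hI2 : ∀ k, 0 < I2 k)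
    (hc0 : cesaroLim W1 c0) (hc1 : cesaroLim I1 c1) (hc2 : cesaroLim I2 c2)
    (h01 : c0 < c1) (h12 : c1 < c2) :
    Dmap W1 (Dmap I1 I2) = Dmap (Dmap W1 I1) (Dmap (Rmap W1 I1) I2) := by
  classical
  have h02 : c0 < c2 := h01.trans h12
  have laW1 := IPaux.la_all hc0
  have laI1 := IPaux.la_all hc1
  have laI2 := IPaux.la_all hc2
  have slW1 : ∀ k, IPaux.SL W1 k := fun k => IPaux.sl_of_la (laW1 k)
  have hphi0 : ∀ ε > 0, ∃ C, 0 ≤ C ∧ ∀ n m : ℕ, |(0:ℝ)| ≤ C + ε * (n + m + 1) := by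
    intro ε hε
    exact ⟨0, le_refl 0, fun n m => by rw [abs_zero]; positivity⟩
  -- ===== J = Smap W1 I1 =====
  have mJ : ∀ k : ℤ, (∀ n : ℕ, Summable fun m => Jterm W1 I1 (k - (n:ℤ)) m) ∧
      (∀ ε > 0, ∃ C, ∀ n : ℕ, Real.log (∑' m, Jterm W1 I1 (k - (n:ℤ)) m) ≤ C + ε * n) :=
    fun k => IPaux.master (fun n m => IPaux.jterm_pos hW1 hI1 _ _) (sub_pos.mpr h01)
      (IPaux.H_gen hW1 hI1 (laW1 k) (laI1 k) hphi0 (fun n m => (add_zero _).symm))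
  have SJ : ∀ i, Summable (Jterm W1 I1 i) := by
    intro i
    have h := (mJ i).1 0
    simpa using h
  have Jpos : ∀ i, 0 < Smap W1 I1 i := fun i =>
    Summable.tsum_pos (SJ i) (fun m => (IPaux.jterm_pos hW1 hI1 i m).le) 0 (IPaux.jterm_pos hW1 hI1 i 0)
  have Jne : ∀ i, Smap W1 I1 i ≠ 0 := fun i => (Jpos i).ne'
  have slJ : ∀ k, IPaux.SL (Smap W1 I1) k := by
    intro k
    refine IPaux.sl_combine (fun ε hε => (mJ k).2 ε hε) (fun ε hε => ?_)
    obtain ⟨C, hC0, hC⟩ := slW1 k ε hε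
    refine ⟨C, fun t => ?_⟩
    have h1 : W1 (k - (t:ℤ)) ≤ Smap W1 I1 (k - (t:ℤ)) := IPaux.smap_lower hW1 hI1 SJ _
    have h2 : Real.log (W1 (k - (t:ℤ))) ≤ Real.log (Smap W1 I1 (k - (t:ℤ))) :=
      Real.log_le_log (hW1 _) h1
    have h3 := (abs_le.mp (hC t)).1
    linarith
  -- ===== K = Smap I1 I2 =====
  have mK : ∀ k : ℤ, (∀ n : ℕ, Summable fun m => Jterm I1 I2 (k - (n:ℤ)) m) ∧
      (∀ ε > 0, ∃ C, ∀ n : ℕ, Real.log (∑' m, Jterm I1 I2 (k - (n:ℤ)) m) ≤ C + ε * n) :=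
    fun k => IPaux.master (fun n m => IPaux.jterm_pos hI1 hI2 _ _) (sub_pos.mpr h12)
      (IPaux.H_gen hI1 hI2 (laI1 k) (laI2 k) hphi0 (fun n m => (add_zero _).symm))
  have SK : ∀ i, Summable (Jterm I1 I2 i) := by
    intro i
    have h := (mK i).1 0
    simpa using h
  have Kpos : ∀ i, 0 < Smap I1 I2 i := fun i =>
    Summable.tsum_pos (SK i) (fun m => (IPaux.jterm_pos hI1 hI2 i m).le) 0 (IPaux.jterm_pos hI1 hI2 i 0)
  have Kne : ∀ i, Smap I1 I2 i ≠ 0 := fun i => (Kpos i).ne'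
  have slK : ∀ k, IPaux.SL (Smap I1 I2) k := by
    intro k
    refine IPaux.sl_combine (fun ε hε => (mK k).2 ε hε) (fun ε hε => ?_)
    obtain ⟨C, hC0, hC⟩ := IPaux.sl_of_la (laI1 k) ε hε
    refine ⟨C, fun t => ?_⟩
    have h1 : I1 (k - (t:ℤ)) ≤ Smap I1 I2 (k - (t:ℤ)) := IPaux.smap_lower hI1 hI2 SK _
    have h2 : Real.log (I1 (k - (t:ℤ))) ≤ Real.log (Smap I1 I2 (k - (t:ℤ))) :=
      Real.log_le_log (hI1 _) h1
    have h3 := (abs_le.mp (hC t)).1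
    linarith
  -- ===== recursion and pointwise formulas =====
  have hrecJ : ∀ i, I1 i * Smap W1 I1 i = W1 i * I1 i + W1 i * Smap W1 I1 (i - 1) := by
    intro i
    have h := IPaux.smap_rec SJ i
    have h1 := (hI1 i).ne'
    rw [h]
    field_simp
  have W2f : ∀ i, Rmap W1 I1 i = W1 i * (Smap W1 I1 (i - 1) / Smap W1 I1 i) := by
    intro i
    have h1 := (hI1 i).ne'
    have h2 := Jne (i - 1)
    have h3 := Jne i
    have h5 : I1 i + Smap W1 I1 (i - 1) ≠ 0 := (add_pos (hI1 i) (Jpos (i - 1))).ne'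
    have hq := hrecJ i
    rw [Rmap, inv_add_inv h1 h2, inv_div, ← mul_div_assoc, div_eq_div_iff h5 h3]
    linear_combination Smap W1 I1 (i - 1) * hq
  have Whf : ∀ i, Dmap W1 I1 i = I1 i * (Smap W1 I1 i / Smap W1 I1 (i - 1)) := by
    intro i
    rw [Dmap]
    ring
  have Ihf : ∀ i, Dmap I1 I2 i = I2 i * (Smap I1 I2 i / Smap I1 I2 (i - 1)) := by
    intro i
    rw [Dmap]
    ring
  have W2pos : ∀ i, 0 < Rmap W1 I1 i := fun i => by
    rw [W2f i]
    exact mul_pos (hW1 i) (div_pos (Jpos _) (Jpos _))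
  have Whpos : ∀ i, 0 < Dmap W1 I1 i := fun i => by
    rw [Whf i]
    exact mul_pos (hI1 i) (div_pos (Jpos _) (Jpos _))
  -- ===== telescoped Jterm identities =====
  have T1 : ∀ i m, Jterm (Rmap W1 I1) I2 i m
      = Jterm W1 I2 i m * (Smap W1 I1 (i - (m:ℤ) - 1) / Smap W1 I1 i) :=
    fun i m => IPaux.jterm_num_down Jne W2f i m
  have T2 : ∀ (Y : ℤ → ℝ) i m, Jterm (Dmap W1 I1) Y i m
      = Jterm I1 Y i m * (Smap W1 I1 i / Smap W1 I1 (i - (m:ℤ) - 1)) :=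
    fun Y i m => IPaux.jterm_num_up Jne Whf i m
  have T3 : ∀ i m, Jterm W1 (Dmap I1 I2) i m
      = Jterm W1 I2 i m * (Smap I1 I2 (i - (m:ℤ)) / Smap I1 I2 i) :=
    fun i m => IPaux.jterm_den Kne (fun i => (hI2 i).ne') Ihf i m
  -- ===== L = Smap W2 I2 =====
  have mL : ∀ k : ℤ, (∀ n : ℕ, Summable fun m => Jterm (Rmap W1 I1) I2 (k - (n:ℤ)) m) ∧
      (∀ ε > 0, ∃ C, ∀ n : ℕ,
        Real.log (∑' m, Jterm (Rmap W1 I1) I2 (k - (n:ℤ)) m) ≤ C + ε * n) := by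
    intro k
    refine IPaux.master (fun n m => IPaux.jterm_pos W2pos hI2 _ _) (sub_pos.mpr h02) ?_
    refine IPaux.H_gen hW1 hI2 (laW1 k) (laI2 k)
      (φ := fun n m => Real.log (Smap W1 I1 (k - (n:ℤ) - (m:ℤ) - 1))
        - Real.log (Smap W1 I1 (k - (n:ℤ)))) ?_ ?_
    · intro ε hε
      obtain ⟨C, hC0, hC⟩ := slJ k (ε/2) (by positivity)
      refine ⟨2*C, by positivity, fun n m => ?_⟩
      have hm0 : (0:ℝ) ≤ ε * m := by positivity
      have h1 := abs_le.mp (hC (n + m + 1))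
      have h2 := abs_le.mp (hC n)
      rw [show k - (n:ℤ) - (m:ℤ) - 1 = k - ((n + m + 1 : ℕ):ℤ) from by push_cast; ring]
      rw [abs_le]
      push_cast at h1 h2 ⊢
      constructor
      · linarith [h1.1, h2.2]
      · linarith [h1.2, h2.1]
    · intro n m
      rw [T1, Real.log_mul (IPaux.jterm_pos hW1 hI2 _ _).ne'
        (div_pos (Jpos _) (Jpos _)).ne', Real.log_div (Jne _) (Jne _)]
  have SL2 : ∀ i, Summable (Jterm (Rmap W1 I1) I2 i) := by
    intro i
    have h := (mL i).1 0
    simpa using h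
  have Lpos : ∀ i, 0 < Smap (Rmap W1 I1) I2 i := fun i =>
    Summable.tsum_pos (SL2 i) (fun m => (IPaux.jterm_pos W2pos hI2 i m).le) 0
      (IPaux.jterm_pos W2pos hI2 i 0)
  have Lne : ∀ i, Smap (Rmap W1 I1) I2 i ≠ 0 := fun i => (Lpos i).ne'
  have I3f : ∀ i, Dmap (Rmap W1 I1) I2 i
      = I2 i * (Smap (Rmap W1 I1) I2 i / Smap (Rmap W1 I1) I2 (i - 1)) := by
    intro i
    rw [Dmap]
    ring
  have T4 : ∀ i m, Jterm (Dmap W1 I1) (Dmap (Rmap W1 I1) I2) i m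
      = Jterm (Dmap W1 I1) I2 i m
        * (Smap (Rmap W1 I1) I2 (i - (m:ℤ)) / Smap (Rmap W1 I1) I2 i) :=
    fun i m => IPaux.jterm_den Lne (fun i => (hI2 i).ne') I3f i m
  have slL : ∀ k, IPaux.SL (Smap (Rmap W1 I1) I2) k := by
    intro k
    refine IPaux.sl_combine (fun ε hε => (mL k).2 ε hε) (fun ε hε => ?_)
    obtain ⟨CW, hCW0, hCW⟩ := slW1 k (ε/3) (by positivity)
    obtain ⟨CJ, hCJ0, hCJ⟩ := slJ k (ε/3) (by positivity)
    refine ⟨CW + 2*CJ + ε, fun t => ?_⟩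
    have h1 : Rmap W1 I1 (k - (t:ℤ)) ≤ Smap (Rmap W1 I1) I2 (k - (t:ℤ)) :=
      IPaux.smap_lower W2pos hI2 SL2 _
    have h2 : Real.log (Rmap W1 I1 (k - (t:ℤ)))
        ≤ Real.log (Smap (Rmap W1 I1) I2 (k - (t:ℤ))) := Real.log_le_log (W2pos _) h1
    have h3 : Real.log (Rmap W1 I1 (k - (t:ℤ))) = Real.log (W1 (k - (t:ℤ)))
        + (Real.log (Smap W1 I1 (k - (t:ℤ) - 1)) - Real.log (Smap W1 I1 (k - (t:ℤ)))) := by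
      rw [W2f, Real.log_mul (hW1 _).ne' (div_pos (Jpos _) (Jpos _)).ne',
        Real.log_div (Jne _) (Jne _)]
    rw [show k - (t:ℤ) - 1 = k - ((t + 1 : ℕ):ℤ) from by push_cast; ring] at h3
    have h4 := (abs_le.mp (hCW t)).1
    have h5 := (abs_le.mp (hCJ (t + 1))).1
    have h6 := (abs_le.mp (hCJ t)).2
    push_cast at h3 h4 h5 h6 ⊢
    linarith
  -- ===== A = Smap W1 (Dmap I1 I2) =====
  have mA : ∀ k : ℤ, (∀ n : ℕ, Summable fun m => Jterm W1 (Dmap I1 I2) (k - (n:ℤ)) m) ∧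
      (∀ ε > 0, ∃ C, ∀ n : ℕ,
        Real.log (∑' m, Jterm W1 (Dmap I1 I2) (k - (n:ℤ)) m) ≤ C + ε * n) := by
    intro k
    have Ihpos : ∀ i, 0 < Dmap I1 I2 i := fun i => by
      rw [Ihf i]
      exact mul_pos (hI2 i) (div_pos (Kpos _) (Kpos _))
    refine IPaux.master (fun n m => IPaux.jterm_pos hW1 Ihpos _ _) (sub_pos.mpr h02) ?_
    refine IPaux.H_gen hW1 hI2 (laW1 k) (laI2 k)
      (φ := fun n m => Real.log (Smap I1 I2 (k - (n:ℤ) - (m:ℤ)))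
        - Real.log (Smap I1 I2 (k - (n:ℤ)))) ?_ ?_
    · intro ε hε
      obtain ⟨C, hC0, hC⟩ := slK k (ε/2) (by positivity)
      refine ⟨2*C, by positivity, fun n m => ?_⟩
      have hm0 : (0:ℝ) ≤ ε * m := by positivity
      have h1 := abs_le.mp (hC (n + m))
      have h2 := abs_le.mp (hC n)
      rw [show k - (n:ℤ) - (m:ℤ) = k - ((n + m : ℕ):ℤ) from by push_cast; ring]
      rw [abs_le]
      push_cast at h1 h2 ⊢
      constructor
      · linarith [h1.1, h2.2]
      · linarith [h1.2, h2.1]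
    · intro n m
      rw [T3, Real.log_mul (IPaux.jterm_pos hW1 hI2 _ _).ne'
        (div_pos (Kpos _) (Kpos _)).ne', Real.log_div (Kne _) (Kne _)]
  have SA : ∀ i, Summable (Jterm W1 (Dmap I1 I2) i) := by
    intro i
    have h := (mA i).1 0
    simpa using h
  have Ihpos : ∀ i, 0 < Dmap I1 I2 i := fun i => by
    rw [Ihf i]
    exact mul_pos (hI2 i) (div_pos (Kpos _) (Kpos _))
  have Apos : ∀ i, 0 < Smap W1 (Dmap I1 I2) i := fun i =>
    Summable.tsum_pos (SA i) (fun m => (IPaux.jterm_pos hW1 Ihpos i m).le) 0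
      (IPaux.jterm_pos hW1 Ihpos i 0)
  have Ane : ∀ i, Smap W1 (Dmap I1 I2) i ≠ 0 := fun i => (Apos i).ne'
  -- ===== T = Smap Wh I3 =====
  have I3pos : ∀ i, 0 < Dmap (Rmap W1 I1) I2 i := fun i => by
    rw [I3f i]
    exact mul_pos (hI2 i) (div_pos (Lpos _) (Lpos _))
  have mT : ∀ k : ℤ,
      (∀ n : ℕ, Summable fun m => Jterm (Dmap W1 I1) (Dmap (Rmap W1 I1) I2) (k - (n:ℤ)) m) ∧
      (∀ ε > 0, ∃ C, ∀ n : ℕ,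
        Real.log (∑' m, Jterm (Dmap W1 I1) (Dmap (Rmap W1 I1) I2) (k - (n:ℤ)) m)
          ≤ C + ε * n) := by
    intro k
    refine IPaux.master (fun n m => IPaux.jterm_pos Whpos I3pos _ _) (sub_pos.mpr h12) ?_
    refine IPaux.H_gen hI1 hI2 (laI1 k) (laI2 k)
      (φ := fun n m => (Real.log (Smap W1 I1 (k - (n:ℤ)))
          - Real.log (Smap W1 I1 (k - (n:ℤ) - (m:ℤ) - 1)))
        + (Real.log (Smap (Rmap W1 I1) I2 (k - (n:ℤ) - (m:ℤ)))
          - Real.log (Smap (Rmap W1 I1) I2 (k - (n:ℤ))))) ?_ ?_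
    · intro ε hε
      obtain ⟨CJ, hCJ0, hCJ⟩ := slJ k (ε/4) (by positivity)
      obtain ⟨CL, hCL0, hCL⟩ := slL k (ε/4) (by positivity)
      refine ⟨2*CJ + 2*CL, by positivity, fun n m => ?_⟩
      have hm0 : (0:ℝ) ≤ ε * m := by positivity
      have h1 := abs_le.mp (hCJ n)
      have h2 := abs_le.mp (hCJ (n + m + 1))
      have h3 := abs_le.mp (hCL (n + m))
      have h4 := abs_le.mp (hCL n)
      rw [show k - (n:ℤ) - (m:ℤ) - 1 = k - ((n + m + 1 : ℕ):ℤ) from by push_cast; ring,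
        show k - (n:ℤ) - (m:ℤ) = k - ((n + m : ℕ):ℤ) from by push_cast; ring]
      rw [abs_le]
      push_cast at h1 h2 h3 h4 ⊢
      constructor
      · linarith [h1.1, h2.2, h3.1, h4.2]
      · linarith [h1.2, h2.1, h3.2, h4.1]
    · intro n m
      rw [T4, T2, Real.log_mul (mul_pos (IPaux.jterm_pos hI1 hI2 _ _)
          (div_pos (Jpos _) (Jpos _))).ne' (div_pos (Lpos _) (Lpos _)).ne',
        Real.log_mul (IPaux.jterm_pos hI1 hI2 _ _).ne' (div_pos (Jpos _) (Jpos _)).ne',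
        Real.log_div (Jne _) (Jne _), Real.log_div (Lne _) (Lne _)]
      ring
  have ST : ∀ i, Summable (Jterm (Dmap W1 I1) (Dmap (Rmap W1 I1) I2) i) := by
    intro i
    have h := (mT i).1 0
    simpa using h
  have Tpos : ∀ i, 0 < Smap (Dmap W1 I1) (Dmap (Rmap W1 I1) I2) i := fun i =>
    Summable.tsum_pos (ST i) (fun m => (IPaux.jterm_pos Whpos I3pos i m).le) 0
      (IPaux.jterm_pos Whpos I3pos i 0)
  have Tne : ∀ i, Smap (Dmap W1 I1) (Dmap (Rmap W1 I1) I2) i ≠ 0 := fun i => (Tpos i).ne'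
  -- ===== per-term Fubini identities =====
  have P1 : ∀ (k : ℤ) (m : ℕ), Jterm W1 (Dmap I1 I2) k m * Smap I1 I2 k
      = Jterm W1 I2 k m * Smap I1 I2 (k - (m:ℤ)) := by
    intro k m
    rw [T3, mul_assoc, div_mul_cancel₀ _ (Kne k)]
  have P2 : ∀ (k : ℤ) (m : ℕ),
      Jterm (Dmap W1 I1) (Dmap (Rmap W1 I1) I2) k m * Smap (Rmap W1 I1) I2 k
        = Jterm (Dmap W1 I1) I2 k m * Smap (Rmap W1 I1) I2 (k - (m:ℤ)) := by
    intro k m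
    rw [T4, mul_assoc, div_mul_cancel₀ _ (Lne k)]
  -- ===== the key intertwining identity =====
  have key : ∀ k : ℤ, Smap W1 (Dmap I1 I2) k * Smap I1 I2 k
      = Smap (Dmap W1 I1) (Dmap (Rmap W1 I1) I2) k * Smap (Rmap W1 I1) I2 k := by
    intro k
    have hI2ne : ∀ i, I2 i ≠ 0 := fun i => (hI2 i).ne'
    have hFs : Summable (fun q : ℕ × ℕ =>
        Jterm W1 I2 k q.1 * Jterm I1 I2 (k - (q.1:ℤ)) q.2) := by
      have hnn : (0 : (ℕ × ℕ) → ℝ) ≤ (fun q : ℕ × ℕ =>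
          Jterm W1 I2 k q.1 * Jterm I1 I2 (k - (q.1:ℤ)) q.2) := fun q =>
        mul_nonneg (IPaux.jterm_pos hW1 hI2 _ _).le (IPaux.jterm_pos hI1 hI2 _ _).le
      have hrow : ∀ x : ℕ, Summable (fun y : ℕ =>
          Jterm W1 I2 k x * Jterm I1 I2 (k - (x:ℤ)) y) := fun x => (SK _).mul_left _
      have hcol : Summable (fun x : ℕ =>
          ∑' y : ℕ, Jterm W1 I2 k x * Jterm I1 I2 (k - (x:ℤ)) y) := by
        refine Summable.congr ((SA k).mul_right (Smap I1 I2 k)) fun m => ?_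
        rw [P1]
        simp only [Smap]
        exact (Summable.tsum_mul_left _ (SK _)).symm
      exact (summable_prod_of_nonneg hnn).mpr ⟨hrow, hcol⟩
    have hGs : Summable (fun q : ℕ × ℕ =>
        Jterm (Dmap W1 I1) I2 k q.1 * Jterm (Rmap W1 I1) I2 (k - (q.1:ℤ)) q.2) := by
      have hnn : (0 : (ℕ × ℕ) → ℝ) ≤ (fun q : ℕ × ℕ =>
          Jterm (Dmap W1 I1) I2 k q.1 * Jterm (Rmap W1 I1) I2 (k - (q.1:ℤ)) q.2) := fun q =>
        mul_nonneg (IPaux.jterm_pos Whpos hI2 _ _).le (IPaux.jterm_pos W2pos hI2 _ _).le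
      have hrow : ∀ x : ℕ, Summable (fun y : ℕ =>
          Jterm (Dmap W1 I1) I2 k x * Jterm (Rmap W1 I1) I2 (k - (x:ℤ)) y) :=
        fun x => (SL2 _).mul_left _
      have hcol : Summable (fun x : ℕ =>
          ∑' y : ℕ, Jterm (Dmap W1 I1) I2 k x * Jterm (Rmap W1 I1) I2 (k - (x:ℤ)) y) := by
        refine Summable.congr ((ST k).mul_right (Smap (Rmap W1 I1) I2 k)) fun m => ?_
        rw [P2]
        simp only [Smap]
        exact (Summable.tsum_mul_left _ (SL2 _)).symm
      exact (summable_prod_of_nonneg hnn).mpr ⟨hrow, hcol⟩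
    have e1 : Smap W1 (Dmap I1 I2) k * Smap I1 I2 k
        = ∑' m : ℕ, Jterm W1 I2 k m * Smap I1 I2 (k - (m:ℤ)) := by
      rw [Smap, ← tsum_mul_right]
      exact tsum_congr fun m => P1 k m
    have e2 : (∑' m : ℕ, Jterm W1 I2 k m * Smap I1 I2 (k - (m:ℤ)))
        = ∑' q : ℕ × ℕ, Jterm W1 I2 k q.1 * Jterm I1 I2 (k - (q.1:ℤ)) q.2 := by
      rw [Summable.tsum_prod' hFs (fun m => by dsimp only; exact (SK _).mul_left _)]
      simp only [Smap]
      exact tsum_congr fun m => (Summable.tsum_mul_left _ (SK _)).symm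
    have f1 : Smap (Dmap W1 I1) (Dmap (Rmap W1 I1) I2) k * Smap (Rmap W1 I1) I2 k
        = ∑' m : ℕ, Jterm (Dmap W1 I1) I2 k m * Smap (Rmap W1 I1) I2 (k - (m:ℤ)) := by
      rw [Smap, ← tsum_mul_right]
      exact tsum_congr fun m => P2 k m
    have f2 : (∑' m : ℕ, Jterm (Dmap W1 I1) I2 k m * Smap (Rmap W1 I1) I2 (k - (m:ℤ)))
        = ∑' q : ℕ × ℕ, Jterm (Dmap W1 I1) I2 k q.1
            * Jterm (Rmap W1 I1) I2 (k - (q.1:ℤ)) q.2 := by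
      rw [Summable.tsum_prod' hGs (fun m => by dsimp only; exact (SL2 _).mul_left _)]
      simp only [Smap]
      exact tsum_congr fun m => (Summable.tsum_mul_left _ (SL2 _)).symm
    have hd1 : (∑' q : ℕ × ℕ, Jterm W1 I2 k q.1 * Jterm I1 I2 (k - (q.1:ℤ)) q.2)
        = ∑' p : ℕ, ∑ m ∈ Finset.range (p + 1),
            Jterm W1 I2 k m * Jterm I1 I2 (k - (m:ℤ)) (p - m) :=
      IPaux.tsum_diag (f := fun m n => Jterm W1 I2 k m * Jterm I1 I2 (k - (m:ℤ)) n) hFs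
    have hd2 : (∑' q : ℕ × ℕ, Jterm (Dmap W1 I1) I2 k q.1
            * Jterm (Rmap W1 I1) I2 (k - (q.1:ℤ)) q.2)
        = ∑' p : ℕ, ∑ m ∈ Finset.range (p + 1),
            Jterm (Dmap W1 I1) I2 k m * Jterm (Rmap W1 I1) I2 (k - (m:ℤ)) (p - m) :=
      IPaux.tsum_diag
        (f := fun m n => Jterm (Dmap W1 I1) I2 k m * Jterm (Rmap W1 I1) I2 (k - (m:ℤ)) n) hGs
    rw [e1, e2, hd1, f1, f2, hd2]
    refine tsum_congr fun p => ?_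
    calc (∑ m ∈ Finset.range (p + 1), Jterm W1 I2 k m * Jterm I1 I2 (k - (m:ℤ)) (p - m))
        = (∑ m ∈ Finset.range (p + 1),
            (∏ r ∈ Finset.range (m + 1), W1 (k - (r:ℤ)))
              * (∏ s ∈ Finset.range (p - m + 1), I1 (k - (m:ℤ) - (s:ℤ))))
            / ∏ r ∈ Finset.range p, I2 (k - (r:ℤ)) := by
          rw [Finset.sum_div]
          exact Finset.sum_congr rfl fun m hm =>
            IPaux.pure_term hI2ne k (Nat.lt_succ_iff.mp (Finset.mem_range.mp hm))
      _ = (∑ m ∈ Finset.range (p + 1),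
            ((∏ r ∈ Finset.range (m + 1), I1 (k - (r:ℤ)))
                * (Smap W1 I1 k / Smap W1 I1 (k - (m:ℤ) - 1)))
              * ((∏ s ∈ Finset.range (p - m + 1), W1 (k - (m:ℤ) - (s:ℤ)))
                * (Smap W1 I1 (k - (p:ℤ) - 1) / Smap W1 I1 (k - (m:ℤ)))))
            / ∏ r ∈ Finset.range p, I2 (k - (r:ℤ)) := by
          rw [IPaux.CFL hrecJ k p, IPaux.CFR Jne hrecJ k p]
      _ = (∑ m ∈ Finset.range (p + 1),
            (∏ r ∈ Finset.range (m + 1), Dmap W1 I1 (k - (r:ℤ)))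
              * (∏ s ∈ Finset.range (p - m + 1), Rmap W1 I1 (k - (m:ℤ) - (s:ℤ))))
            / ∏ r ∈ Finset.range p, I2 (k - (r:ℤ)) := by
          congr 1
          refine Finset.sum_congr rfl fun m hm => ?_
          have hm' : m ≤ p := Nat.lt_succ_iff.mp (Finset.mem_range.mp hm)
          have c1 : (∏ r ∈ Finset.range (m + 1), Dmap W1 I1 (k - (r:ℤ)))
              = (∏ r ∈ Finset.range (m + 1), I1 (k - (r:ℤ)))
                * (Smap W1 I1 k / Smap W1 I1 (k - (m:ℤ) - 1)) := by
            rw [Finset.prod_congr rfl (fun (r : ℕ) (_ : r ∈ Finset.range (m + 1)) => Whf (k - (r:ℤ))), Finset.prod_mul_distrib,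
              IPaux.prod_telescope Jne k (m + 1),
              show k - ((m + 1 : ℕ):ℤ) = k - (m:ℤ) - 1 from by push_cast; ring]
          have c2 : (∏ s ∈ Finset.range (p - m + 1), Rmap W1 I1 (k - (m:ℤ) - (s:ℤ)))
              = (∏ s ∈ Finset.range (p - m + 1), W1 (k - (m:ℤ) - (s:ℤ)))
                * (Smap W1 I1 (k - (p:ℤ) - 1) / Smap W1 I1 (k - (m:ℤ))) := by
            rw [Finset.prod_congr rfl (fun (s : ℕ) (_ : s ∈ Finset.range (p - m + 1)) => W2f (k - (m:ℤ) - (s:ℤ))),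
              Finset.prod_mul_distrib, IPaux.prod_telescope' Jne (k - (m:ℤ)) (p - m + 1),
              show k - (m:ℤ) - ((p - m + 1 : ℕ):ℤ) = k - (p:ℤ) - 1 from by omega]
          rw [c1, c2]
      _ = ∑ m ∈ Finset.range (p + 1),
            Jterm (Dmap W1 I1) I2 k m * Jterm (Rmap W1 I1) I2 (k - (m:ℤ)) (p - m) := by
          rw [Finset.sum_div]
          exact (Finset.sum_congr rfl fun m hm =>
            (IPaux.pure_term hI2ne k (Nat.lt_succ_iff.mp (Finset.mem_range.mp hm))).symm)
  -- ===== conclusion =====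
  funext k
  have E1 := key k
  have E2 := key (k - 1)
  simp only [Dmap]
  have n1 := Kne k
  have n2 := Kne (k - 1)
  have n3 := Ane k
  have n4 := Ane (k - 1)
  have n5 := Lne k
  have n6 := Lne (k - 1)
  have n7 := Tne k
  have n8 := Tne (k - 1)
  have n9 := (hI2 k).ne'
  field_simp
  linear_combination (Smap (Dmap W1 I1) (Dmap (Rmap W1 I1) I2) (k - 1)
      * Smap (Rmap W1 I1) I2 (k - 1)) * E1
    - (Smap (Dmap W1 I1) (Dmap (Rmap W1 I1) I2) k
      * Smap (Rmap W1 I1) I2 k) * E2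
end
end
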